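/- arXiv:0712.1072 — 4 statements merged into one kernel-verified Lean document; each statement's English description precedes it below -/
import Mathlib

section
/- Let Γ be a 1-graph and F : Γ → M_k a functor (assigning a k-graph F⁰(v) to each vertex and an isomorphism class of k-morphs F(γ) to each path, compatibly with composition). Then there exists a Γ-system X of k-morphs with [X_γ] = F(γ) for all γ ∈ Γ, and any two Γ-systems inducing F are isomorphic as Γ-systems. -/
/-- A `k`-graph structure on a set `Obj` of vertices and a set `Path` of morphisms:
a countable small category together with a degree functor `d : Path → ℕ^k`
satisfying the unique factorisation property. Vertices are identified with
identity morphisms via `ident`.  Composition is a total function, constrained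
only on composable pairs (`src p = rng q`). -/
structure KGraphStr (k : ℕ) (Obj : Type) (Path : Type) where
  src : Path → Obj
  rng : Path → Obj
  ident : Obj → Path
  comp : Path → Path → Path
  d : Path → Fin k → ℕ
  countable : Countable Path
  nonemptyObj : Nonempty Obj
  src_ident : ∀ v, src (ident v) = v
  rng_ident : ∀ v, rng (ident v) = v
  d_ident : ∀ v, d (ident v) = 0
  src_comp : ∀ p q, src p = rng q → src (comp p q) = src q
  rng_comp : ∀ p q, src p = rng q → rng (comp p q) = rng p
  d_comp : ∀ p q, src p = rng q → d (comp p q) = d p + d q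
  comp_ident : ∀ p, comp p (ident (src p)) = p
  ident_comp : ∀ p, comp (ident (rng p)) p = p
  comp_assoc : ∀ p q r, src p = rng q → src q = rng r →
    comp (comp p q) r = comp p (comp q r)
  factor : ∀ p (m n : Fin k → ℕ), d p = m + n →
    ∃! μν : Path × Path, src μν.1 = rng μν.2 ∧ d μν.1 = m ∧ d μν.2 = n ∧
      comp μν.1 μν.2 = p

/-- A `(Λ,Γ)` `k`-morph: a countable set `X` with `r : X → Λ⁰`, `s : X → Γ⁰`
and a structure bijection `φ : X *_{Γ⁰} Γ → Λ *_{Λ⁰} X`, here encoded by its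
two components `φl`, `φx` (constrained only on composable pairs) together
with the bijectivity condition `bij`. -/
structure KMorph {k : ℕ} {OΛ PΛ OΓ PΓ : Type}
    (Λ : KGraphStr k OΛ PΛ) (Γ : KGraphStr k OΓ PΓ) (X : Type) where
  countable : Countable X
  r : X → OΛ
  s : X → OΓ
  φl : X → PΓ → PΛ
  φx : X → PΓ → X
  src_φl : ∀ x γ, s x = Γ.rng γ → Λ.src (φl x γ) = r (φx x γ)
  d_φl : ∀ x γ, s x = Γ.rng γ → Λ.d (φl x γ) = Γ.d γ
  s_φx : ∀ x γ, s x = Γ.rng γ → s (φx x γ) = Γ.src γ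
  rng_φl : ∀ x γ, s x = Γ.rng γ → Λ.rng (φl x γ) = r x
  mult_φl : ∀ x γ₁ γ₂, s x = Γ.rng γ₁ → Γ.src γ₁ = Γ.rng γ₂ →
      φl x (Γ.comp γ₁ γ₂) = Λ.comp (φl x γ₁) (φl (φx x γ₁) γ₂)
  mult_φx : ∀ x γ₁ γ₂, s x = Γ.rng γ₁ → Γ.src γ₁ = Γ.rng γ₂ →
      φx x (Γ.comp γ₁ γ₂) = φx (φx x γ₁) γ₂
  bij : ∀ lam x', Λ.src lam = r x' →
      ∃! p : X × PΓ, s p.1 = Γ.rng p.2 ∧ φl p.1 p.2 = lam ∧ φx p.1 p.2 = x'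

/-- An isomorphism of `(Λ,Γ)` `k`-morphs: a bijection intertwining the
structure maps. -/
structure MorphIso {k : ℕ} {OΛ PΛ OΓ PΓ X Y : Type}
    {Λ : KGraphStr k OΛ PΛ} {Γ : KGraphStr k OΓ PΓ}
    (M : KMorph Λ Γ X) (N : KMorph Λ Γ Y) where
  θ : X ≃ Y
  r_θ : ∀ x, N.r (θ x) = M.r x
  s_θ : ∀ x, N.s (θ x) = M.s x
  φl_θ : ∀ x γ, M.s x = Γ.rng γ → N.φl (θ x) γ = M.φl x γ
  φx_θ : ∀ x γ, M.s x = Γ.rng γ → N.φx (θ x) γ = θ (M.φx x γ)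

/-- The underlying set `X₁ *_{Λ₁⁰} X₂` of the fibred product of two k-morphs. -/
def FibCarrier {k : ℕ} {O₀ P₀ O₁ P₁ O₂ P₂ X₁ X₂ : Type}
    {Λ₀ : KGraphStr k O₀ P₀} {Λ₁ : KGraphStr k O₁ P₁} {Λ₂ : KGraphStr k O₂ P₂}
    (M₁ : KMorph Λ₀ Λ₁ X₁) (M₂ : KMorph Λ₁ Λ₂ X₂) : Type :=
  {p : X₁ × X₂ // M₁.s p.1 = M₂.r p.2}

/-- `P` is *the* fibred product k-morph of `M₁` and `M₂`:
`r(x₁,x₂) = r(x₁)`, `s(x₁,x₂) = s(x₂)`, and `φ` is obtained by passing a path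
through `M₂` and then through `M₁`. -/
def IsFibProd {k : ℕ} {O₀ P₀ O₁ P₁ O₂ P₂ X₁ X₂ : Type}
    {Λ₀ : KGraphStr k O₀ P₀} {Λ₁ : KGraphStr k O₁ P₁} {Λ₂ : KGraphStr k O₂ P₂}
    (M₁ : KMorph Λ₀ Λ₁ X₁) (M₂ : KMorph Λ₁ Λ₂ X₂)
    (P : KMorph Λ₀ Λ₂ (FibCarrier M₁ M₂)) : Prop :=
  (∀ p : FibCarrier M₁ M₂, P.r p = M₁.r p.1.1) ∧
  (∀ p : FibCarrier M₁ M₂, P.s p = M₂.s p.1.2) ∧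
  (∀ (p : FibCarrier M₁ M₂) lam, P.s p = Λ₂.rng lam →
    P.φl p lam = M₁.φl p.1.1 (M₂.φl p.1.2 lam) ∧
    (P.φx p lam).1.1 = M₁.φx p.1.1 (M₂.φl p.1.2 lam) ∧
    (P.φx p lam).1.2 = M₂.φx p.1.2 lam)

/-- `I` is the identity endomorph `I_Λ` on `Λ`: underlying set `Λ⁰`,
`r = s = id`, and `φ(r(λ),λ) = (λ, s(λ))`. -/
def IsIdMorph {k : ℕ} {O P : Type} {Λ : KGraphStr k O P}
    (I : KMorph Λ Λ O) : Prop :=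
  (∀ v, I.r v = v) ∧ (∀ v, I.s v = v) ∧
  (∀ v lam, I.s v = Λ.rng lam → I.φl v lam = lam ∧ I.φx v lam = Λ.src lam)

/-- A morphism (degree-preserving functor) of k-graphs from `Γ` to `Λ`. -/
structure KGraphHom {k : ℕ} {OΓ PΓ OΛ PΛ : Type}
    (Γ : KGraphStr k OΓ PΓ) (Λ : KGraphStr k OΛ PΛ) where
  vmap : OΓ → OΛ
  pmap : PΓ → PΛ
  src_pmap : ∀ p, Λ.src (pmap p) = vmap (Γ.src p)
  rng_pmap : ∀ p, Λ.rng (pmap p) = vmap (Γ.rng p)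
  d_pmap : ∀ p, Λ.d (pmap p) = Γ.d p
  ident_pmap : ∀ v, pmap (Γ.ident v) = Λ.ident (vmap v)
  comp_pmap : ∀ p q, Γ.src p = Γ.rng q →
      pmap (Γ.comp p q) = Λ.comp (pmap p) (pmap q)

/-- `F : Γ → Λ` is a covering: a surjective k-graph morphism restricting to
bijections `vΓ → F(v)Λ` and `Γv → ΛF(v)` for every vertex `v`. -/
def IsCovering {k : ℕ} {OΓ PΓ OΛ PΛ : Type}
    {Γ : KGraphStr k OΓ PΓ} {Λ : KGraphStr k OΛ PΛ}
    (F : KGraphHom Γ Λ) : Prop :=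
  Function.Surjective F.pmap ∧
  (∀ v : OΓ, Set.BijOn F.pmap {p | Γ.rng p = v} {q | Λ.rng q = F.vmap v}) ∧
  (∀ v : OΓ, Set.BijOn F.pmap {p | Γ.src p = v} {q | Λ.src q = F.vmap v})

/-- `M` is the k-morph `X(F)` (also written `ₚX` for a covering `F = p`)
associated with a k-graph morphism `F : Γ → Λ`: underlying set `Γ⁰`,
`r = F` on vertices, `s = id`, and `φ(r(γ), γ) = (F(γ), s(γ))`. -/
def IsXalpha {k : ℕ} {OΓ PΓ OΛ PΛ : Type}
    {Γ : KGraphStr k OΓ PΓ} {Λ : KGraphStr k OΛ PΛ}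
    (F : KGraphHom Γ Λ) (M : KMorph Λ Γ OΓ) : Prop :=
  (∀ v, M.r v = F.vmap v) ∧ (∀ v, M.s v = v) ∧
  (∀ v γ, M.s v = Γ.rng γ → M.φl v γ = F.pmap γ ∧ M.φx v γ = Γ.src γ)

/-- An isomorphism of (higher-rank) graph structures. -/
structure GraphIso {k : ℕ} {O P O' P' : Type}
    (S : KGraphStr k O P) (S' : KGraphStr k O' P') where
  ev : O ≃ O'
  ep : P ≃ P'
  src_ep : ∀ p, S'.src (ep p) = ev (S.src p)
  rng_ep : ∀ p, S'.rng (ep p) = ev (S.rng p)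
  d_ep : ∀ p, S'.d (ep p) = S.d p
  ident_ep : ∀ v, ep (S.ident v) = S'.ident (ev v)
  comp_ep : ∀ p q, S.src p = S.rng q → ep (S.comp p q) = S'.comp (ep p) (ep q)

section Systems

variable {l k : ℕ} {VΓ PΓ : Type}

/-- Transport a k-morph along an equality of vertices (first graph). -/
def leftCast {ObjF PathF : VΓ → Type} (gr : ∀ v, KGraphStr k (ObjF v) (PathF v))
    {v w : VΓ} (h : v = w) {OΓ' PΓ' X : Type} {Γ' : KGraphStr k OΓ' PΓ'}
    (M : KMorph (gr v) Γ' X) : KMorph (gr w) Γ' X := h ▸ M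

/-- Transport a k-morph along an equality of vertices (second graph). -/
def rightCast {ObjF PathF : VΓ → Type} (gr : ∀ v, KGraphStr k (ObjF v) (PathF v))
    {v w : VΓ} (h : v = w) {OΛ' PΛ' X : Type} {Λ' : KGraphStr k OΛ' PΛ'}
    (M : KMorph Λ' (gr v) X) : KMorph Λ' (gr w) X := h ▸ M

/-- Transport a k-morph along equalities of vertices on both sides. -/
def castMor {ObjF PathF : VΓ → Type} (gr : ∀ v, KGraphStr k (ObjF v) (PathF v))
    {v v' w w' : VΓ} (hv : v = v') (hw : w = w') {X : Type}
    (M : KMorph (gr v) (gr w) X) : KMorph (gr v') (gr w') X :=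
  leftCast gr hv (rightCast gr hw M)

/-- Transport a k-morph along an equality of carriers. -/
def carrierCast {k : ℕ} {OΛ PΛ OΓ PΓ : Type} {Λ : KGraphStr k OΛ PΛ}
    {Γ : KGraphStr k OΓ PΓ} {X Y : Type} (h : X = Y) (M : KMorph Λ Γ X) :
    KMorph Λ Γ Y := h ▸ M

/-- A `Γ`-system of k-morphs over an `l`-graph `G`: k-graphs `Λ_v = gr v` at
each vertex, a `(Λ_{r(γ)}, Λ_{s(γ)})` k-morph `X γ` at each path, fibred
products `prod`, and k-morph isomorphisms `θ_{α,β} = th h` from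
`X_α *_{Λ_{s(α)}⁰} X_β` to `X_{αβ}`, such that `X_v = I_{Λ_v}` at vertices,
`θ_{r(β),β}`, `θ_{α,s(α)}` are the canonical isomorphisms, and the
associativity coherence holds. -/
structure GammaSystem (G : KGraphStr l VΓ PΓ) (ObjF PathF : VΓ → Type)
    (gr : ∀ v, KGraphStr k (ObjF v) (PathF v)) where
  X : PΓ → Type
  mor : ∀ γ, KMorph (gr (G.rng γ)) (gr (G.src γ)) (X γ)
  prod : ∀ ⦃α β : PΓ⦄ (h : G.src α = G.rng β),
    KMorph (gr (G.rng α)) (gr (G.src β))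
      (FibCarrier (mor α) (leftCast gr h.symm (mor β)))
  prod_spec : ∀ ⦃α β : PΓ⦄ (h : G.src α = G.rng β),
    IsFibProd (mor α) (leftCast gr h.symm (mor β)) (prod h)
  th : ∀ ⦃α β : PΓ⦄ (h : G.src α = G.rng β),
    MorphIso (prod h)
      (castMor gr (G.rng_comp α β h) (G.src_comp α β h) (mor (G.comp α β)))
  unit_type : ∀ v, X (G.ident v) = ObjF v
  unit_id : ∀ v, IsIdMorph (carrierCast (unit_type v)
    (castMor gr (G.rng_ident v) (G.src_ident v) (mor (G.ident v))))
  th_unit_left : ∀ (β : PΓ) (h : G.src (G.ident (G.rng β)) = G.rng β) p,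
    cast (congrArg X (G.ident_comp β)) ((th h).θ p) = p.1.2
  th_unit_right : ∀ (α : PΓ) (h : G.src α = G.rng (G.ident (G.src α))) p,
    cast (congrArg X (G.comp_ident α)) ((th h).θ p) = p.1.1
  th_assoc : ∀ (α β γ : PΓ) (h₁ : G.src α = G.rng β) (h₂ : G.src β = G.rng γ)
    (h₃ : G.src (G.comp α β) = G.rng γ) (h₄ : G.src α = G.rng (G.comp β γ))
    (x₁ : X α) (x₂ : X β) (x₃ : X γ)
    (hx₁₂ : (mor α).s x₁ = (leftCast gr h₁.symm (mor β)).r x₂)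
    (hL : (mor (G.comp α β)).s ((th h₁).θ ⟨(x₁, x₂), hx₁₂⟩)
            = (leftCast gr h₃.symm (mor γ)).r x₃)
    (hx₂₃ : (mor β).s x₂ = (leftCast gr h₂.symm (mor γ)).r x₃)
    (hR : (mor α).s x₁
            = (leftCast gr h₄.symm (mor (G.comp β γ))).r
                ((th h₂).θ ⟨(x₂, x₃), hx₂₃⟩)),
    cast (congrArg X (G.comp_assoc α β γ h₁ h₂))
        ((th h₃).θ ⟨((th h₁).θ ⟨(x₁, x₂), hx₁₂⟩, x₃), hL⟩)
      = (th h₄).θ ⟨(x₁, (th h₂).θ ⟨(x₂, x₃), hx₂₃⟩), hR⟩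

end Systems

/-- The data of a functor `F : Γ → M_k` (with object map `v ↦ gr v`): a
choice of representative k-morph `mor γ` of the class `F(γ)` for each path,
such that `F(v)` is the class of the identity endomorph at each vertex, and
such that the class of the fibred product `F(α) * F(β)` is `F(αβ)` for every
composable pair. -/
structure MkFunctorData {l k : ℕ} {VΓ PΓ : Type} (G : KGraphStr l VΓ PΓ)
    (ObjF PathF : VΓ → Type) (gr : ∀ v, KGraphStr k (ObjF v) (PathF v)) where
  X : PΓ → Type
  mor : ∀ γ, KMorph (gr (G.rng γ)) (gr (G.src γ)) (X γ)
  unit : ∀ v, ∃ I : KMorph (gr v) (gr v) (ObjF v), IsIdMorph I ∧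
    Nonempty (MorphIso
      (castMor gr (G.rng_ident v) (G.src_ident v) (mor (G.ident v))) I)
  compat : ∀ ⦃α β : PΓ⦄ (h : G.src α = G.rng β)
    (P : KMorph (gr (G.rng α)) (gr (G.src β))
      (FibCarrier (mor α) (leftCast gr h.symm (mor β)))),
    IsFibProd (mor α) (leftCast gr h.symm (mor β)) P →
    Nonempty (MorphIso P
      (castMor gr (G.rng_comp α β h) (G.src_comp α β h) (mor (G.comp α β))))

/-- An isomorphism of `Γ`-systems (over the same vertex k-graphs): a family
of k-morph isomorphisms intertwining the isomorphisms `θ_{α,β}`. -/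
def SystemIso {l k : ℕ} {VΓ PΓ : Type} {G : KGraphStr l VΓ PΓ}
    {ObjF PathF : VΓ → Type} {gr : ∀ v, KGraphStr k (ObjF v) (PathF v)}
    (sys₁ sys₂ : GammaSystem G ObjF PathF gr) : Prop :=
  ∃ e : ∀ γ : PΓ, MorphIso (sys₁.mor γ) (sys₂.mor γ),
    ∀ ⦃α β : PΓ⦄ (h : G.src α = G.rng β)
      (x₁ : sys₁.X α) (x₂ : sys₁.X β)
      (hx : (sys₁.mor α).s x₁ = (leftCast gr h.symm (sys₁.mor β)).r x₂)
      (hx' : (sys₂.mor α).s ((e α).θ x₁)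
               = (leftCast gr h.symm (sys₂.mor β)).r ((e β).θ x₂)),
      (e (G.comp α β)).θ ((sys₁.th h).θ ⟨(x₁, x₂), hx⟩)
        = (sys₂.th h).θ ⟨((e α).θ x₁, (e β).θ x₂), hx'⟩


/- ======================= Auxiliary infrastructure ======================= -/

section Infra

namespace KGraphStr

variable {k : ℕ} {O P : Type} (Λ : KGraphStr k O P)

theorem src_eq_rng_of_eq_ident {p : P} (h : p = Λ.ident (Λ.rng p)) :
    Λ.src p = Λ.rng p := by
  conv_lhs => rw [h]
  rw [Λ.src_ident]

theorem eq_ident_of_d_eq_zero {p : P} (h : Λ.d p = 0) :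
    p = Λ.ident (Λ.rng p) := by
  obtain ⟨mn, _, huniq⟩ := Λ.factor p 0 0 (by simp [h])
  have h1 := huniq (Λ.ident (Λ.rng p), p)
    ⟨by rw [Λ.src_ident], Λ.d_ident _, h, Λ.ident_comp p⟩
  have h2 := huniq (p, Λ.ident (Λ.src p))
    ⟨by rw [Λ.rng_ident], h, Λ.d_ident _, Λ.comp_ident p⟩
  exact (congrArg Prod.fst (h1.trans h2.symm)).symm

theorem countable_obj (Λ : KGraphStr k O P) : Countable O := by
  have : Countable P := Λ.countable
  have hinj : Function.Injective Λ.ident := fun a b h => by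
    rw [← Λ.rng_ident a, h, Λ.rng_ident]
  exact hinj.countable

end KGraphStr

namespace MorphIso

variable {k : ℕ} {OΛ PΛ OΓ PΓ X Y Z : Type}
  {Λ : KGraphStr k OΛ PΛ} {Γ : KGraphStr k OΓ PΓ}

def refl (M : KMorph Λ Γ X) : MorphIso M M :=
  ⟨Equiv.refl X, fun _ => rfl, fun _ => rfl, fun _ _ _ => rfl, fun _ _ _ => rfl⟩

def symm {M : KMorph Λ Γ X} {N : KMorph Λ Γ Y} (i : MorphIso M N) :
    MorphIso N M where
  θ := i.θ.symm
  r_θ y := by rw [← i.r_θ (i.θ.symm y), Equiv.apply_symm_apply]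
  s_θ y := by rw [← i.s_θ (i.θ.symm y), Equiv.apply_symm_apply]
  φl_θ y γ hc := by
    have hs : M.s (i.θ.symm y) = Γ.rng γ := by
      rw [← i.s_θ (i.θ.symm y), Equiv.apply_symm_apply]; exact hc
    have := i.φl_θ (i.θ.symm y) γ hs
    rw [Equiv.apply_symm_apply] at this
    exact this.symm
  φx_θ y γ hc := by
    have hs : M.s (i.θ.symm y) = Γ.rng γ := by
      rw [← i.s_θ (i.θ.symm y), Equiv.apply_symm_apply]; exact hc
    have := i.φx_θ (i.θ.symm y) γ hs
    rw [Equiv.apply_symm_apply] at this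
    rw [this, Equiv.symm_apply_apply]

def trans {M : KMorph Λ Γ X} {N : KMorph Λ Γ Y} {Q : KMorph Λ Γ Z}
    (i : MorphIso M N) (j : MorphIso N Q) : MorphIso M Q where
  θ := i.θ.trans j.θ
  r_θ x := (j.r_θ (i.θ x)).trans (i.r_θ x)
  s_θ x := (j.s_θ (i.θ x)).trans (i.s_θ x)
  φl_θ x γ hc := by
    have hs : N.s (i.θ x) = Γ.rng γ := (i.s_θ x).trans hc
    exact (j.φl_θ (i.θ x) γ hs).trans (i.φl_θ x γ hc)
  φx_θ x γ hc := by
    have hs : N.s (i.θ x) = Γ.rng γ := (i.s_θ x).trans hc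
    show Q.φx (j.θ (i.θ x)) γ = j.θ (i.θ (M.φx x γ))
    rw [j.φx_θ (i.θ x) γ hs, i.φx_θ x γ hc]

@[simp] theorem refl_θ (M : KMorph Λ Γ X) (x : X) : (refl M).θ x = x := rfl

@[simp] theorem trans_θ {M : KMorph Λ Γ X} {N : KMorph Λ Γ Y} {Q : KMorph Λ Γ Z}
    (i : MorphIso M N) (j : MorphIso N Q) (x : X) :
    (i.trans j).θ x = j.θ (i.θ x) := rfl

@[simp] theorem symm_θ {M : KMorph Λ Γ X} {N : KMorph Λ Γ Y} (i : MorphIso M N)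
    (y : Y) : i.symm.θ y = i.θ.symm y := rfl

end MorphIso

/-- The identity k-morph on a k-graph. -/
def idKMorph {k : ℕ} {O P : Type} (Λ : KGraphStr k O P) : KMorph Λ Λ O where
  countable := KGraphStr.countable_obj Λ
  r := id
  s := id
  φl _ lam := lam
  φx _ lam := Λ.src lam
  src_φl _ _ _ := rfl
  d_φl _ _ _ := rfl
  s_φx _ _ _ := rfl
  rng_φl _ _ h := h.symm
  mult_φl _ _ _ _ _ := rfl
  mult_φx _ γ₁ γ₂ _ h2 := Λ.src_comp γ₁ γ₂ h2
  bij lam x' h := by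
    refine ⟨(Λ.rng lam, lam), ⟨rfl, rfl, h⟩, ?_⟩
    rintro ⟨v, γ⟩ ⟨hv, hγl, hγx⟩
    subst hγl
    simp only [Prod.mk.injEq]
    exact ⟨hv, trivial⟩

theorem isIdMorph_idKMorph {k : ℕ} {O P : Type} (Λ : KGraphStr k O P) :
    IsIdMorph (idKMorph Λ) :=
  ⟨fun _ => rfl, fun _ => rfl, fun _ _ _ => ⟨rfl, rfl⟩⟩

/-- Canonical morph isomorphism between any two identity morphs. -/
def isoOfIsIdMorph {k : ℕ} {O P : Type} {Λ : KGraphStr k O P}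
    {I J : KMorph Λ Λ O} (hI : IsIdMorph I) (hJ : IsIdMorph J) :
    MorphIso I J where
  θ := Equiv.refl O
  r_θ v := (hJ.1 v).trans (hI.1 v).symm
  s_θ v := (hJ.2.1 v).trans (hI.2.1 v).symm
  φl_θ v lam hc := by
    have hc' : J.s v = Λ.rng lam := (hJ.2.1 v).trans (((hI.2.1 v).symm).trans hc)
    exact ((hJ.2.2 v lam hc').1).trans ((hI.2.2 v lam hc).1).symm
  φx_θ v lam hc := by
    have hc' : J.s v = Λ.rng lam := (hJ.2.1 v).trans (((hI.2.1 v).symm).trans hc)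
    exact ((hJ.2.2 v lam hc').2).trans ((hI.2.2 v lam hc).2).symm

end Infra

section Fib
attribute [local instance] Classical.propDecidable

variable {k : ℕ} {O₀ P₀ O₁ P₁ O₂ P₂ O₃ P₃ X₁ X₂ X₃ : Type}
  {Λ₀ : KGraphStr k O₀ P₀} {Λ₁ : KGraphStr k O₁ P₁} {Λ₂ : KGraphStr k O₂ P₂}
  {Λ₃ : KGraphStr k O₃ P₃}

theorem fib_inner (M₁ : KMorph Λ₀ Λ₁ X₁) (M₂ : KMorph Λ₁ Λ₂ X₂)
    (p : FibCarrier M₁ M₂) {γ : P₂} (h : M₂.s p.1.2 = Λ₂.rng γ) :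
    M₁.s p.1.1 = Λ₁.rng (M₂.φl p.1.2 γ) := by
  rw [M₂.rng_φl _ _ h]; exact p.2

/-- The fibred product of two k-morphs. -/
noncomputable def fibKMorph (M₁ : KMorph Λ₀ Λ₁ X₁) (M₂ : KMorph Λ₁ Λ₂ X₂) :
    KMorph Λ₀ Λ₂ (FibCarrier M₁ M₂) where
  countable := by
    have := M₁.countable; have := M₂.countable
    exact inferInstanceAs (Countable {p : X₁ × X₂ // M₁.s p.1 = M₂.r p.2})
  r p := M₁.r p.1.1
  s p := M₂.s p.1.2
  φl p γ := M₁.φl p.1.1 (M₂.φl p.1.2 γ)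
  φx p γ :=
    if h : M₂.s p.1.2 = Λ₂.rng γ then
      ⟨(M₁.φx p.1.1 (M₂.φl p.1.2 γ), M₂.φx p.1.2 γ), by
        rw [M₁.s_φx _ _ (fib_inner M₁ M₂ p h)]; exact M₂.src_φl _ _ h⟩
    else p
  src_φl p γ h := by
    erw [dif_pos h]
    exact M₁.src_φl _ _ (fib_inner M₁ M₂ p h)
  d_φl p γ h := by
    rw [M₁.d_φl _ _ (fib_inner M₁ M₂ p h), M₂.d_φl _ _ h]
  s_φx p γ h := by
    erw [dif_pos h]
    exact M₂.s_φx _ _ h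
  rng_φl p γ h := M₁.rng_φl _ _ (fib_inner M₁ M₂ p h)
  mult_φl p γ₁ γ₂ h₁ h₂ := by
    have hin₁ := fib_inner M₁ M₂ p h₁
    have hsx : M₂.s (M₂.φx p.1.2 γ₁) = Λ₂.rng γ₂ := by
      rw [M₂.s_φx _ _ h₁]; exact h₂
    have hB : Λ₁.src (M₂.φl p.1.2 γ₁) = Λ₁.rng (M₂.φl (M₂.φx p.1.2 γ₁) γ₂) := by
      rw [M₂.src_φl _ _ h₁, M₂.rng_φl _ _ hsx]
    erw [dif_pos h₁]
    show M₁.φl p.1.1 (M₂.φl p.1.2 (Λ₂.comp γ₁ γ₂)) = _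
    rw [M₂.mult_φl p.1.2 γ₁ γ₂ h₁ h₂]
    exact M₁.mult_φl p.1.1 _ _ hin₁ hB
  mult_φx p γ₁ γ₂ h₁ h₂ := by
    have hin₁ := fib_inner M₁ M₂ p h₁
    have hsx : M₂.s (M₂.φx p.1.2 γ₁) = Λ₂.rng γ₂ := by
      rw [M₂.s_φx _ _ h₁]; exact h₂
    have hB : Λ₁.src (M₂.φl p.1.2 γ₁) = Λ₁.rng (M₂.φl (M₂.φx p.1.2 γ₁) γ₂) := by
      rw [M₂.src_φl _ _ h₁, M₂.rng_φl _ _ hsx]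
    have hcomp : M₂.s p.1.2 = Λ₂.rng (Λ₂.comp γ₁ γ₂) := by
      rw [Λ₂.rng_comp _ _ h₂]; exact h₁
    erw [dif_pos hcomp, dif_pos h₁, dif_pos hsx]
    apply Subtype.ext
    simp only [Prod.mk.injEq]
    constructor
    · rw [M₂.mult_φl p.1.2 γ₁ γ₂ h₁ h₂]
      exact M₁.mult_φx p.1.1 _ _ hin₁ hB
    · exact M₂.mult_φx p.1.2 γ₁ γ₂ h₁ h₂
  bij lam x' h := by
    obtain ⟨⟨w₁, w₂⟩, hw⟩ := x'
    dsimp only at h ⊢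
    obtain ⟨⟨x₁, l⟩, ⟨hs1, hl1, hx1⟩, u1⟩ := M₁.bij lam w₁ h
    have hsl : Λ₁.src l = M₂.r w₂ := by
      have := M₁.s_φx x₁ l hs1
      rw [hx1] at this
      rw [← this]; exact hw
    obtain ⟨⟨x₂, γ⟩, ⟨hs2, hl2, hx2⟩, u2⟩ := M₂.bij l w₂ hsl
    have hpair : M₁.s x₁ = M₂.r x₂ := by
      rw [hs1, ← hl2, M₂.rng_φl _ _ hs2]
    refine ⟨(⟨(x₁, x₂), hpair⟩, γ), ⟨hs2, ?_, ?_⟩, ?_⟩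
    · show M₁.φl x₁ (M₂.φl x₂ γ) = lam
      rw [hl2]; exact hl1
    · show dite _ _ _ = _
      erw [dif_pos (show M₂.s x₂ = Λ₂.rng γ from hs2)]
      apply Subtype.ext
      simp only [Prod.mk.injEq]
      exact ⟨by rw [hl2]; exact hx1, hx2⟩
    · rintro ⟨⟨⟨y₁, y₂⟩, hy⟩, δ⟩ ⟨c1, c2, c3⟩
      dsimp only at c1 c2 c3 ⊢
      erw [dif_pos c1] at c3
      have c3' := congrArg Subtype.val c3
      simp only [Prod.mk.injEq] at c3'
      have e1 := u1 (y₁, M₂.φl y₂ δ)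
        ⟨by rw [M₂.rng_φl _ _ c1]; exact hy, c2, c3'.1⟩
      simp only [Prod.mk.injEq] at e1
      have e2 := u2 (y₂, δ) ⟨c1, e1.2, c3'.2⟩
      simp only [Prod.mk.injEq] at e2
      obtain ⟨ey1, -⟩ := e1
      obtain ⟨ey2, eδ⟩ := e2
      subst ey1; subst ey2; subst eδ
      rfl

end Fib

section Fib2
attribute [local instance] Classical.propDecidable

variable {k : ℕ} {O₀ P₀ O₁ P₁ O₂ P₂ O₃ P₃ X₁ X₂ X₃ Y₁ Y₂ Y : Type}
  {Λ₀ : KGraphStr k O₀ P₀} {Λ₁ : KGraphStr k O₁ P₁} {Λ₂ : KGraphStr k O₂ P₂}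
  {Λ₃ : KGraphStr k O₃ P₃}

theorem fibKMorph_φx_pos (M₁ : KMorph Λ₀ Λ₁ X₁) (M₂ : KMorph Λ₁ Λ₂ X₂)
    (p : FibCarrier M₁ M₂) {γ : P₂} (h : M₂.s p.1.2 = Λ₂.rng γ) :
    (fibKMorph M₁ M₂).φx p γ
      = ⟨(M₁.φx p.1.1 (M₂.φl p.1.2 γ), M₂.φx p.1.2 γ), by
          rw [M₁.s_φx _ _ (fib_inner M₁ M₂ p h)]; exact M₂.src_φl _ _ h⟩ := by
  show dite _ _ _ = _
  erw [dif_pos h]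

theorem fibKMorph_s (M₁ : KMorph Λ₀ Λ₁ X₁) (M₂ : KMorph Λ₁ Λ₂ X₂)
    (p : FibCarrier M₁ M₂) : (fibKMorph M₁ M₂).s p = M₂.s p.1.2 := rfl

theorem fibKMorph_r (M₁ : KMorph Λ₀ Λ₁ X₁) (M₂ : KMorph Λ₁ Λ₂ X₂)
    (p : FibCarrier M₁ M₂) : (fibKMorph M₁ M₂).r p = M₁.r p.1.1 := rfl

theorem fibKMorph_φl (M₁ : KMorph Λ₀ Λ₁ X₁) (M₂ : KMorph Λ₁ Λ₂ X₂)
    (p : FibCarrier M₁ M₂) (γ : P₂) :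
    (fibKMorph M₁ M₂).φl p γ = M₁.φl p.1.1 (M₂.φl p.1.2 γ) := rfl

theorem isFibProd_fibKMorph (M₁ : KMorph Λ₀ Λ₁ X₁) (M₂ : KMorph Λ₁ Λ₂ X₂) :
    IsFibProd M₁ M₂ (fibKMorph M₁ M₂) := by
  refine ⟨fun _ => rfl, fun _ => rfl, fun p lam hc => ?_⟩
  have hc' : M₂.s p.1.2 = Λ₂.rng lam := hc
  rw [fibKMorph_φx_pos M₁ M₂ p hc']
  exact ⟨rfl, rfl, rfl⟩

/-- Any realization of the fibred product is isomorphic (by the identity map)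
to `fibKMorph`. -/
noncomputable def isoOfFibProd {M₁ : KMorph Λ₀ Λ₁ X₁} {M₂ : KMorph Λ₁ Λ₂ X₂}
    {P : KMorph Λ₀ Λ₂ (FibCarrier M₁ M₂)} (hP : IsFibProd M₁ M₂ P) :
    MorphIso P (fibKMorph M₁ M₂) where
  θ := Equiv.refl _
  r_θ p := (hP.1 p).symm
  s_θ p := (hP.2.1 p).symm
  φl_θ p γ hc := ((hP.2.2 p γ hc).1).symm
  φx_θ p γ hc := by
    have hc' : M₂.s p.1.2 = Λ₂.rng γ := (hP.2.1 p) ▸ hc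
    show (fibKMorph M₁ M₂).φx p γ = P.φx p γ
    rw [fibKMorph_φx_pos M₁ M₂ p hc']
    apply Subtype.ext
    obtain ⟨h1, h2, h3⟩ := hP.2.2 p γ hc
    exact Prod.ext h2.symm h3.symm

/-- Functoriality of the fibred product with respect to morph isomorphisms. -/
noncomputable def fibIso {M₁ : KMorph Λ₀ Λ₁ X₁} {N₁ : KMorph Λ₀ Λ₁ Y₁}
    {M₂ : KMorph Λ₁ Λ₂ X₂} {N₂ : KMorph Λ₁ Λ₂ Y₂}
    (i₁ : MorphIso M₁ N₁) (i₂ : MorphIso M₂ N₂) :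
    MorphIso (fibKMorph M₁ M₂) (fibKMorph N₁ N₂) where
  θ := { toFun := fun p => ⟨(i₁.θ p.1.1, i₂.θ p.1.2), by
           rw [i₁.s_θ, i₂.r_θ]; exact p.2⟩
         invFun := fun p => ⟨(i₁.θ.symm p.1.1, i₂.θ.symm p.1.2), by
           have h1 : N₁.s p.1.1 = M₁.s (i₁.θ.symm p.1.1) := by
             rw [← i₁.s_θ (i₁.θ.symm p.1.1), Equiv.apply_symm_apply]
           have h2 : N₂.r p.1.2 = M₂.r (i₂.θ.symm p.1.2) := by
             rw [← i₂.r_θ (i₂.θ.symm p.1.2), Equiv.apply_symm_apply]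
           rw [← h1, ← h2]; exact p.2⟩
         left_inv := fun p => by
           apply Subtype.ext
           show (i₁.θ.symm (i₁.θ p.1.1), i₂.θ.symm (i₂.θ p.1.2)) = p.1
           simp only [Equiv.symm_apply_apply]
         right_inv := fun p => by
           apply Subtype.ext
           show (i₁.θ (i₁.θ.symm p.1.1), i₂.θ (i₂.θ.symm p.1.2)) = p.1
           simp only [Equiv.apply_symm_apply] }
  r_θ p := i₁.r_θ p.1.1
  s_θ p := i₂.s_θ p.1.2
  φl_θ p γ hc := by
    have hc2 : M₂.s p.1.2 = Λ₂.rng γ := hc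
    show N₁.φl (i₁.θ p.1.1) (N₂.φl (i₂.θ p.1.2) γ) = _
    rw [i₂.φl_θ p.1.2 γ hc2]
    exact i₁.φl_θ p.1.1 _ (fib_inner M₁ M₂ p hc2)
  φx_θ p γ hc := by
    have hc2 : M₂.s p.1.2 = Λ₂.rng γ := hc
    have hcN : N₂.s (i₂.θ p.1.2) = Λ₂.rng γ := by rw [i₂.s_θ]; exact hc2
    show (fibKMorph N₁ N₂).φx ⟨(i₁.θ p.1.1, i₂.θ p.1.2), _⟩ γ = _
    erw [fibKMorph_φx_pos N₁ N₂ _ hcN, fibKMorph_φx_pos M₁ M₂ p hc2]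
    apply Subtype.ext
    refine Prod.ext ?_ ?_
    · show N₁.φx (i₁.θ p.1.1) (N₂.φl (i₂.θ p.1.2) γ) = i₁.θ (M₁.φx p.1.1 (M₂.φl p.1.2 γ))
      rw [i₂.φl_θ p.1.2 γ hc2]
      exact i₁.φx_θ p.1.1 _ (fib_inner M₁ M₂ p hc2)
    · exact i₂.φx_θ p.1.2 γ hc2

/-- Left unit: fibred product with the identity morph. -/
noncomputable def unitL {Γ : KGraphStr k O₂ P₂} (M : KMorph Λ₀ Γ Y) :
    MorphIso (fibKMorph (idKMorph Λ₀) M) M where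
  θ := { toFun := fun p => p.1.2
         invFun := fun y => ⟨(M.r y, y), rfl⟩
         left_inv := fun p => by
           apply Subtype.ext
           have hp : p.1.1 = M.r p.1.2 := p.2
           show (M.r p.1.2, p.1.2) = p.1
           rw [← hp]
         right_inv := fun y => rfl }
  r_θ p := (p.2 : p.1.1 = M.r p.1.2).symm
  s_θ p := rfl
  φl_θ p γ hc := rfl
  φx_θ p γ hc := by
    have hc2 : M.s p.1.2 = Γ.rng γ := hc
    show M.φx p.1.2 γ = ((fibKMorph (idKMorph Λ₀) M).φx p γ).1.2
    rw [fibKMorph_φx_pos _ M p hc2]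

/-- Right unit: fibred product with the identity morph. -/
noncomputable def unitR (M : KMorph Λ₀ Λ₁ Y) :
    MorphIso (fibKMorph M (idKMorph Λ₁)) M where
  θ := { toFun := fun p => p.1.1
         invFun := fun y => ⟨(y, M.s y), rfl⟩
         left_inv := fun p => by
           apply Subtype.ext
           have hp : M.s p.1.1 = p.1.2 := p.2
           show (p.1.1, M.s p.1.1) = p.1
           rw [hp]
         right_inv := fun y => rfl }
  r_θ p := rfl
  s_θ p := p.2
  φl_θ p γ hc := rfl
  φx_θ p γ hc := by
    have hc2 : p.1.2 = Λ₁.rng γ := hc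
    show M.φx p.1.1 γ = ((fibKMorph M (idKMorph Λ₁)).φx p γ).1.1
    rw [fibKMorph_φx_pos M _ p hc2]
    rfl

/-- Associativity of the fibred product. -/
noncomputable def assocIso (M₁ : KMorph Λ₀ Λ₁ X₁) (M₂ : KMorph Λ₁ Λ₂ X₂)
    (M₃ : KMorph Λ₂ Λ₃ X₃) :
    MorphIso (fibKMorph (fibKMorph M₁ M₂) M₃)
      (fibKMorph M₁ (fibKMorph M₂ M₃)) where
  θ := { toFun := fun p => ⟨(p.1.1.1.1, ⟨(p.1.1.1.2, p.1.2), p.2⟩), p.1.1.2⟩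
         invFun := fun p => ⟨(⟨(p.1.1, p.1.2.1.1), p.2⟩, p.1.2.1.2), p.1.2.2⟩
         left_inv := fun p => by apply Subtype.ext; exact Prod.ext rfl rfl
         right_inv := fun p => by apply Subtype.ext; exact Prod.ext rfl rfl }
  r_θ p := rfl
  s_θ p := rfl
  φl_θ p γ hc := rfl
  φx_θ p γ hc := by
    have hc3 : M₃.s p.1.2 = Λ₃.rng γ := hc
    have hc3' : (fibKMorph M₂ M₃).s (⟨(p.1.1.1.2, p.1.2), p.2⟩ : FibCarrier M₂ M₃)
        = Λ₃.rng γ := hc3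
    have hc2 : M₂.s p.1.1.1.2 = Λ₂.rng (M₃.φl p.1.2 γ) := by
      rw [M₃.rng_φl _ _ hc3]; exact p.2
    show (fibKMorph M₁ (fibKMorph M₂ M₃)).φx ⟨(p.1.1.1.1, ⟨(p.1.1.1.2, p.1.2), p.2⟩), _⟩ γ = _
    erw [fibKMorph_φx_pos M₁ (fibKMorph M₂ M₃) _ hc3',
        fibKMorph_φx_pos (fibKMorph M₁ M₂) M₃ p hc3]
    simp only [Equiv.coe_fn_mk]
    apply Subtype.ext
    refine Prod.ext ?_ ?_
    · show M₁.φx p.1.1.1.1 ((fibKMorph M₂ M₃).φl ⟨(p.1.1.1.2, p.1.2), p.2⟩ γ)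
        = (((fibKMorph M₁ M₂).φx p.1.1 (M₃.φl p.1.2 γ)) : FibCarrier M₁ M₂).1.1
      rw [fibKMorph_φx_pos M₁ M₂ p.1.1 hc2]
      rfl
    · show (fibKMorph M₂ M₃).φx ⟨(p.1.1.1.2, p.1.2), p.2⟩ γ = _
      rw [fibKMorph_φx_pos M₂ M₃ (⟨(p.1.1.1.2, p.1.2), p.2⟩ : FibCarrier M₂ M₃) hc3]
      apply Subtype.ext
      refine Prod.ext ?_ rfl
      show M₂.φx p.1.1.1.2 (M₃.φl p.1.2 γ)
        = (((fibKMorph M₁ M₂).φx p.1.1 (M₃.φl p.1.2 γ)) : FibCarrier M₁ M₂).1.2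
      rw [fibKMorph_φx_pos M₁ M₂ p.1.1 hc2]

end Fib2

section CastUtils

variable {l k : ℕ} {VΓ PΓ : Type}
  {ObjF PathF : VΓ → Type} {gr : ∀ v, KGraphStr k (ObjF v) (PathF v)}

/-- Master transport of a morph isomorphism along heterogeneous equalities. -/
noncomputable def transIso {v w v' w' : VΓ} {X X' Y Y' : Type}
    {M : KMorph (gr v) (gr w) X} {M' : KMorph (gr v') (gr w') X'}
    {N : KMorph (gr v) (gr w) Y} {N' : KMorph (gr v') (gr w') Y'}
    (hv : v = v') (hw : w = w') (hX : X = X') (hY : Y = Y')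
    (hM : HEq M M') (hN : HEq N N') (i : MorphIso M N) : MorphIso M' N' :=
  match v', w', X', Y', M', N', hv, hw, hX, hY, hM, hN with
  | _, _, _, _, _, _, rfl, rfl, rfl, rfl, HEq.refl _, HEq.refl _ => i

theorem transIso_θ {v w v' w' : VΓ} {X X' Y Y' : Type}
    {M : KMorph (gr v) (gr w) X} {M' : KMorph (gr v') (gr w') X'}
    {N : KMorph (gr v) (gr w) Y} {N' : KMorph (gr v') (gr w') Y'}
    (hv : v = v') (hw : w = w') (hX : X = X') (hY : Y = Y')
    (hM : HEq M M') (hN : HEq N N') (i : MorphIso M N) (x : X') :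
    (transIso hv hw hX hY hM hN i).θ x = cast hY (i.θ (cast hX.symm x)) := by
  cases hv; cases hw; cases hX; cases hY; cases hM; cases hN; rfl

theorem transIso_θ_heq {v w v' w' : VΓ} {X X' Y Y' : Type}
    {M : KMorph (gr v) (gr w) X} {M' : KMorph (gr v') (gr w') X'}
    {N : KMorph (gr v) (gr w) Y} {N' : KMorph (gr v') (gr w') Y'}
    (hv : v = v') (hw : w = w') (hX : X = X') (hY : Y = Y')
    (hM : HEq M M') (hN : HEq N N') (i : MorphIso M N) {x : X} {x' : X'}
    (hx : HEq x x') :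
    HEq ((transIso hv hw hX hY hM hN i).θ x') (i.θ x) := by
  cases hv; cases hw; cases hX; cases hY; cases hM; cases hN
  cases hx; rfl

theorem heq_leftCast {v w : VΓ} (h : v = w) {OΓ' PΓ' X : Type}
    {Γ' : KGraphStr k OΓ' PΓ'} (M : KMorph (gr v) Γ' X) :
    HEq (leftCast gr h M) M := by subst h; rfl

theorem heq_rightCast {v w : VΓ} (h : v = w) {OΛ' PΛ' X : Type}
    {Λ' : KGraphStr k OΛ' PΛ'} (M : KMorph Λ' (gr v) X) :
    HEq (rightCast gr h M) M := by subst h; rfl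

theorem heq_castMor {v v' w w' : VΓ} (hv : v = v') (hw : w = w') {X : Type}
    (M : KMorph (gr v) (gr w) X) : HEq (castMor gr hv hw M) M := by
  subst hv; subst hw; rfl

theorem heq_carrierCast {OΛ PΛ OΓ PΓ' : Type} {Λ : KGraphStr k OΛ PΛ}
    {Γ : KGraphStr k OΓ PΓ'} {X Y : Type} (h : X = Y) (M : KMorph Λ Γ X) :
    HEq (carrierCast h M) M := by subst h; rfl

theorem fibKMorph_heq {a a' b b' c c' : VΓ} {X₁ X₁' X₂ X₂' : Type}
    (ha : a = a') (hb : b = b') (hc : c = c') (h1 : X₁ = X₁') (h2 : X₂ = X₂')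
    {M₁ : KMorph (gr a) (gr b) X₁} {M₁' : KMorph (gr a') (gr b') X₁'}
    {M₂ : KMorph (gr b) (gr c) X₂} {M₂' : KMorph (gr b') (gr c') X₂'}
    (hM₁ : HEq M₁ M₁') (hM₂ : HEq M₂ M₂') :
    FibCarrier M₁ M₂ = FibCarrier M₁' M₂'
      ∧ HEq (fibKMorph M₁ M₂) (fibKMorph M₁' M₂') := by
  subst ha; subst hb; subst hc; subst h1; subst h2
  cases hM₁; cases hM₂; exact ⟨rfl, HEq.rfl⟩

end CastUtils

section OneGraph

variable {VΓ PΓ : Type} (G : KGraphStr 1 VΓ PΓ)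

theorem oneGraph_d_const (γ : PΓ) : G.d γ = fun _ => G.d γ 0 :=
  funext fun i => by rw [Subsingleton.elim i 0]

theorem eq_ident_of_deg0 {γ : PΓ} (h : G.d γ 0 = 0) :
    γ = G.ident (G.rng γ) :=
  G.eq_ident_of_d_eq_zero (by
    rw [oneGraph_d_const G γ, h]; rfl)

theorem rng_eq_src_of_deg0 {γ : PΓ} (h : G.d γ 0 = 0) :
    G.rng γ = G.src γ := by
  conv_rhs => rw [eq_ident_of_deg0 G h]
  rw [G.src_ident]

theorem deg_comp {p q : PΓ} (h : G.src p = G.rng q) :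
    G.d (G.comp p q) 0 = G.d p 0 + G.d q 0 := by
  rw [G.d_comp p q h]; rfl

theorem edgeFacEU {γ : PΓ} {n : ℕ} (h : G.d γ 0 = n + 1) :
    ∃! eq : PΓ × PΓ, G.src eq.1 = G.rng eq.2 ∧ G.d eq.1 = (fun _ => 1)
      ∧ G.d eq.2 = (fun _ => n) ∧ G.comp eq.1 eq.2 = γ :=
  G.factor γ (fun _ => 1) (fun _ => n) (by
    rw [oneGraph_d_const G γ, h]
    funext i
    show n + 1 = 1 + n
    omega)

noncomputable def fE {γ : PΓ} {n : ℕ} (h : G.d γ 0 = n + 1) : PΓ :=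
  (edgeFacEU G h).exists.choose.1

noncomputable def fQ {γ : PΓ} {n : ℕ} (h : G.d γ 0 = n + 1) : PΓ :=
  (edgeFacEU G h).exists.choose.2

theorem fE_src {γ : PΓ} {n : ℕ} (h : G.d γ 0 = n + 1) :
    G.src (fE G h) = G.rng (fQ G h) := (edgeFacEU G h).exists.choose_spec.1

theorem fE_deg {γ : PΓ} {n : ℕ} (h : G.d γ 0 = n + 1) :
    G.d (fE G h) 0 = 1 :=
  congrFun (edgeFacEU G h).exists.choose_spec.2.1 0

theorem fQ_deg {γ : PΓ} {n : ℕ} (h : G.d γ 0 = n + 1) :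
    G.d (fQ G h) 0 = n :=
  congrFun (edgeFacEU G h).exists.choose_spec.2.2.1 0

theorem fE_comp {γ : PΓ} {n : ℕ} (h : G.d γ 0 = n + 1) :
    G.comp (fE G h) (fQ G h) = γ := (edgeFacEU G h).exists.choose_spec.2.2.2

theorem fE_unique {γ : PΓ} {n : ℕ} (h : G.d γ 0 = n + 1) {e q : PΓ}
    (hsrc : G.src e = G.rng q) (hde : G.d e 0 = 1) (hdq : G.d q 0 = n)
    (hc : G.comp e q = γ) : e = fE G h ∧ q = fQ G h := by
  have hP : (fun eq : PΓ × PΓ => G.src eq.1 = G.rng eq.2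
      ∧ G.d eq.1 = (fun _ => 1) ∧ G.d eq.2 = (fun _ => n)
      ∧ G.comp eq.1 eq.2 = γ) (e, q) := by
    refine ⟨hsrc, ?_, ?_, hc⟩
    · rw [oneGraph_d_const G e, hde]
    · rw [oneGraph_d_const G q, hdq]
  have hQ := (edgeFacEU G h).exists.choose_spec
  have := (edgeFacEU G h).unique hP hQ
  exact ⟨congrArg Prod.fst this, congrArg Prod.snd this⟩

theorem fE_rng {γ : PΓ} {n : ℕ} (h : G.d γ 0 = n + 1) :
    G.rng (fE G h) = G.rng γ := by
  conv_rhs => rw [← fE_comp G h]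
  rw [G.rng_comp _ _ (fE_src G h)]

theorem fQ_src {γ : PΓ} {n : ℕ} (h : G.d γ 0 = n + 1) :
    G.src (fQ G h) = G.src γ := by
  conv_rhs => rw [← fE_comp G h]
  rw [G.src_comp _ _ (fE_src G h)]

end OneGraph

section Sys
attribute [local instance] Classical.propDecidable

variable {k : ℕ} {VΓ PΓ : Type} (G : KGraphStr 1 VΓ PΓ)
  {ObjF PathF : VΓ → Type} (gr : ∀ v, KGraphStr k (ObjF v) (PathF v))
  (F : MkFunctorData G ObjF PathF gr)

/-- Recursive construction of the canonical system morphs, by degree. -/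
noncomputable def MD : (n : ℕ) → (γ : PΓ) → G.d γ 0 = n →
    Σ X : Type, KMorph (gr (G.rng γ)) (gr (G.src γ)) X
  | 0, γ, h => ⟨ObjF (G.rng γ),
      rightCast gr (rng_eq_src_of_deg0 G h) (idKMorph (gr (G.rng γ)))⟩
  | (n+1), γ, h =>
      ⟨FibCarrier (F.mor (fE G h))
        (leftCast gr (fE_src G h).symm (MD n (fQ G h) (fQ_deg G h)).2),
       castMor gr (fE_rng G h) (fQ_src G h)
         (fibKMorph (F.mor (fE G h))
           (leftCast gr (fE_src G h).symm (MD n (fQ G h) (fQ_deg G h)).2))⟩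

noncomputable def Xs (γ : PΓ) : Type := (MD G gr F (G.d γ 0) γ rfl).1

noncomputable def morS (γ : PΓ) :
    KMorph (gr (G.rng γ)) (gr (G.src γ)) (Xs G gr F γ) :=
  (MD G gr F (G.d γ 0) γ rfl).2

theorem Xs_eq {γ : PΓ} {n : ℕ} (h : G.d γ 0 = n) :
    Xs G gr F γ = (MD G gr F n γ h).1 := by subst h; rfl

theorem morS_heq {γ : PΓ} {n : ℕ} (h : G.d γ 0 = n) :
    HEq (morS G gr F γ) (MD G gr F n γ h).2 := by subst h; rfl

theorem Xs0 {γ : PΓ} (h : G.d γ 0 = 0) :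
    Xs G gr F γ = ObjF (G.rng γ) := Xs_eq G gr F h

theorem morS0_heq {γ : PΓ} (h : G.d γ 0 = 0) :
    HEq (morS G gr F γ)
      (rightCast gr (rng_eq_src_of_deg0 G h) (idKMorph (gr (G.rng γ)))) :=
  morS_heq G gr F h

theorem XsS {γ : PΓ} {n : ℕ} (h : G.d γ 0 = n + 1) :
    Xs G gr F γ = FibCarrier (F.mor (fE G h))
      (leftCast gr (fE_src G h).symm (MD G gr F n (fQ G h) (fQ_deg G h)).2) :=
  Xs_eq G gr F h

theorem morSS_heq {γ : PΓ} {n : ℕ} (h : G.d γ 0 = n + 1) :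
    HEq (morS G gr F γ)
      (castMor gr (fE_rng G h) (fQ_src G h)
        (fibKMorph (F.mor (fE G h))
          (leftCast gr (fE_src G h).symm (MD G gr F n (fQ G h) (fQ_deg G h)).2))) :=
  morS_heq G gr F h

theorem Xs_congr {γ γ' : PΓ} (h : γ = γ') : Xs G gr F γ = Xs G gr F γ' := by
  subst h; rfl

theorem morS_congr {γ γ' : PΓ} (h : γ = γ') :
    HEq (morS G gr F γ) (morS G gr F γ') := by subst h; rfl

theorem idK_congr {v w : VΓ} (h : v = w) :
    HEq (idKMorph (gr v)) (idKMorph (gr w)) := by subst h; rfl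

theorem FmorX_congr {γ γ' : PΓ} (h : γ = γ') : F.X γ = F.X γ' := by
  subst h; rfl

theorem Fmor_congr {γ γ' : PΓ} (h : γ = γ') :
    HEq (F.mor γ) (F.mor γ') := by subst h; rfl

/-- The fibred product morph underlying the system. -/
noncomputable def prodS {α β : PΓ} (h : G.src α = G.rng β) :
    KMorph (gr (G.rng α)) (gr (G.src β))
      (FibCarrier (morS G gr F α) (leftCast gr h.symm (morS G gr F β))) :=
  fibKMorph _ _

/-- The target of the structure isomorphisms θ. -/
noncomputable def TGT {α β : PΓ} (h : G.src α = G.rng β) :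
    KMorph (gr (G.rng α)) (gr (G.src β)) (Xs G gr F (G.comp α β)) :=
  castMor gr (G.rng_comp α β h) (G.src_comp α β h) (morS G gr F (G.comp α β))

end Sys

section Sys2
attribute [local instance] Classical.propDecidable

variable {k : ℕ} {VΓ PΓ : Type} (G : KGraphStr 1 VΓ PΓ)
  {ObjF PathF : VΓ → Type} (gr : ∀ v, KGraphStr k (ObjF v) (PathF v))
  (F : MkFunctorData G ObjF PathF gr)

/- ------------- degree-zero case scaffolding ------------- -/

theorem zero_hv {α β : PΓ} (hd : G.d α 0 = 0) (h : G.src α = G.rng β) :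
    G.rng β = G.rng α := ((rng_eq_src_of_deg0 G hd).trans h).symm

theorem zero_hcomp {α β : PΓ} (hd : G.d α 0 = 0) (h : G.src α = G.rng β) :
    G.comp α β = β := by
  have hα := eq_ident_of_deg0 G hd
  conv_lhs => rw [hα]
  rw [show G.rng α = G.rng β from (zero_hv G hd h).symm, G.ident_comp]

theorem zero_hM₁ {α β : PΓ} (hd : G.d α 0 = 0) (h : G.src α = G.rng β) :
    HEq (idKMorph (gr (G.rng β))) (morS G gr F α) :=
  ((morS0_heq G gr F hd).trans ((heq_rightCast (gr := gr) _ _).trans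
    (idK_congr gr ((rng_eq_src_of_deg0 G hd).trans h)))).symm

theorem zero_heq {α β : PΓ} (hd : G.d α 0 = 0) (h : G.src α = G.rng β) :
    FibCarrier (idKMorph (gr (G.rng β))) (morS G gr F β)
        = FibCarrier (morS G gr F α) (leftCast gr h.symm (morS G gr F β))
      ∧ HEq (fibKMorph (idKMorph (gr (G.rng β))) (morS G gr F β))
        (prodS G gr F h) :=
  fibKMorph_heq (zero_hv G hd h) h.symm rfl
    ((congrArg ObjF (zero_hv G hd h)).trans (Xs0 G gr F hd).symm) rfl
    (zero_hM₁ G gr F hd h) (heq_leftCast (gr := gr) h.symm (morS G gr F β)).symm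

/- ------------- successor case scaffolding ------------- -/

theorem succ_h₂ {α β : PΓ} {n : ℕ} (hd : G.d α 0 = n + 1)
    (h : G.src α = G.rng β) : G.src (fQ G hd) = G.rng β :=
  (fQ_src G hd).trans h

theorem fibA_heq {α : PΓ} {n : ℕ} (hd : G.d α 0 = n + 1) :
    FibCarrier (F.mor (fE G hd))
        (leftCast gr (fE_src G hd).symm (morS G gr F (fQ G hd)))
        = Xs G gr F α
      ∧ HEq (fibKMorph (F.mor (fE G hd))
          (leftCast gr (fE_src G hd).symm (morS G gr F (fQ G hd))))
        (morS G gr F α) := by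
  have inner : HEq
      (leftCast gr (fE_src G hd).symm (MD G gr F n (fQ G hd) (fQ_deg G hd)).2)
      (leftCast gr (fE_src G hd).symm (morS G gr F (fQ G hd))) :=
    ((heq_leftCast (gr := gr) _ _).trans (morS_heq G gr F (fQ_deg G hd)).symm).trans
      (heq_leftCast (gr := gr) _ _).symm
  have hfib := fibKMorph_heq (gr := gr) rfl rfl rfl rfl
    (Xs_eq G gr F (fQ_deg G hd)).symm (HEq.refl (F.mor (fE G hd))) inner
  constructor
  · exact hfib.1.symm.trans (XsS G gr F hd).symm
  · exact ((morSS_heq G gr F hd).trans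
      ((heq_castMor (gr := gr) _ _ _).trans hfib.2)).symm

theorem prodS_heq {α β : PΓ} {n : ℕ} (hd : G.d α 0 = n + 1)
    (h : G.src α = G.rng β) :
    FibCarrier (fibKMorph (F.mor (fE G hd))
          (leftCast gr (fE_src G hd).symm (morS G gr F (fQ G hd))))
        (leftCast gr (succ_h₂ G hd h).symm (morS G gr F β))
        = FibCarrier (morS G gr F α) (leftCast gr h.symm (morS G gr F β))
      ∧ HEq (fibKMorph (fibKMorph (F.mor (fE G hd))
          (leftCast gr (fE_src G hd).symm (morS G gr F (fQ G hd))))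
          (leftCast gr (succ_h₂ G hd h).symm (morS G gr F β)))
        (prodS G gr F h) :=
  fibKMorph_heq (fE_rng G hd) (fQ_src G hd) rfl
    (fibA_heq G gr F hd).1 rfl (fibA_heq G gr F hd).2
    (((heq_leftCast (gr := gr) _ _).trans (heq_leftCast (gr := gr) h.symm _).symm))

theorem M₂_heq {α β : PΓ} {n : ℕ} (hd : G.d α 0 = n + 1)
    (h : G.src α = G.rng β) :
    FibCarrier (morS G gr F (fQ G hd))
        (leftCast gr (succ_h₂ G hd h).symm (morS G gr F β))
        = FibCarrier (leftCast gr (fE_src G hd).symm (morS G gr F (fQ G hd)))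
          (leftCast gr (succ_h₂ G hd h).symm (morS G gr F β))
      ∧ HEq (prodS G gr F (succ_h₂ G hd h))
        (fibKMorph (leftCast gr (fE_src G hd).symm (morS G gr F (fQ G hd)))
          (leftCast gr (succ_h₂ G hd h).symm (morS G gr F β))) :=
  fibKMorph_heq (fE_src G hd).symm rfl rfl rfl rfl
    (heq_leftCast (gr := gr) _ _).symm
    (HEq.refl (leftCast gr (succ_h₂ G hd h).symm (morS G gr F β)))

theorem succ_hd' {α β : PΓ} {n : ℕ} (hd : G.d α 0 = n + 1)
    (h : G.src α = G.rng β) :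
    G.d (G.comp α β) 0 = (n + G.d β 0) + 1 := by
  rw [deg_comp G h, hd]; omega

theorem succ_hcomp {α β : PΓ} {n : ℕ} (hd : G.d α 0 = n + 1)
    (h : G.src α = G.rng β) :
    G.comp (fE G hd) (G.comp (fQ G hd) β) = G.comp α β := by
  rw [← G.comp_assoc _ _ _ (fE_src G hd) (succ_h₂ G hd h), fE_comp G hd]

theorem succ_uniq {α β : PΓ} {n : ℕ} (hd : G.d α 0 = n + 1)
    (h : G.src α = G.rng β) :
    fE G hd = fE G (succ_hd' G hd h)
      ∧ G.comp (fQ G hd) β = fQ G (succ_hd' G hd h) := by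
  apply fE_unique G (succ_hd' G hd h)
  · rw [G.rng_comp _ _ (succ_h₂ G hd h)]; exact fE_src G hd
  · exact fE_deg G hd
  · rw [deg_comp G (succ_h₂ G hd h), fQ_deg G hd]
  · exact succ_hcomp G hd h

theorem tgt_heq {α β : PΓ} {n : ℕ} (hd : G.d α 0 = n + 1)
    (h : G.src α = G.rng β) :
    FibCarrier (F.mor (fE G hd))
        (leftCast gr (fE_src G hd).symm (TGT G gr F (succ_h₂ G hd h)))
        = Xs G gr F (G.comp α β)
      ∧ HEq (fibKMorph (F.mor (fE G hd))
          (leftCast gr (fE_src G hd).symm (TGT G gr F (succ_h₂ G hd h))))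
        (TGT G gr F h) := by
  set hd' := succ_hd' G hd h with hhd'
  obtain ⟨he, hq⟩ := succ_uniq G hd h
  have h₂ := succ_h₂ G hd h
  have hM₂ : HEq
      (leftCast gr (fE_src G hd).symm (TGT G gr F h₂))
      (leftCast gr (fE_src G hd').symm
        (MD G gr F (n + G.d β 0) (fQ G hd') (fQ_deg G hd')).2) :=
    ((((heq_leftCast (gr := gr) _ _).trans (heq_castMor (gr := gr) _ _ _)).trans
      ((morS_congr G gr F hq).trans (morS_heq G gr F (fQ_deg G hd')))).trans
      (heq_leftCast (gr := gr) _ _).symm)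
  have hfib := fibKMorph_heq (congrArg G.rng he) (congrArg G.src he)
    ((G.src_comp _ _ h₂).symm.trans (congrArg G.src hq))
    (FmorX_congr G gr F he)
    ((Xs_congr G gr F hq).trans (Xs_eq G gr F (fQ_deg G hd')))
    (Fmor_congr G gr F he) hM₂
  constructor
  · exact hfib.1.trans (XsS G gr F hd').symm
  · exact hfib.2.trans (((heq_castMor (gr := gr) _ _ _).symm.trans
      (morSS_heq G gr F hd').symm).trans
      (heq_castMor (gr := gr) (G.rng_comp α β h) (G.src_comp α β h)
        (morS G gr F (G.comp α β))).symm)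

end Sys2

section Sys3
attribute [local instance] Classical.propDecidable

variable {k : ℕ} {VΓ PΓ : Type} (G : KGraphStr 1 VΓ PΓ)
  {ObjF PathF : VΓ → Type} (gr : ∀ v, KGraphStr k (ObjF v) (PathF v))
  (F : MkFunctorData G ObjF PathF gr)

noncomputable def leftCast_iso {v w : VΓ} (h : v = w) {OΓ' PΓ' X Y : Type}
    {Γ' : KGraphStr k OΓ' PΓ'} {M : KMorph (gr v) Γ' X} {N : KMorph (gr v) Γ' Y}
    (i : MorphIso M N) : MorphIso (leftCast gr h M) (leftCast gr h N) :=
  match w, h with | _, rfl => i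

theorem leftCast_iso_θ {v w : VΓ} (h : v = w) {OΓ' PΓ' X Y : Type}
    {Γ' : KGraphStr k OΓ' PΓ'} {M : KMorph (gr v) Γ' X} {N : KMorph (gr v) Γ' Y}
    (i : MorphIso M N) (x : X) : (leftCast_iso gr h i).θ x = i.θ x := by
  cases h; rfl

/-- The canonical structure isomorphisms of the constructed system. -/
noncomputable def TH : (n : ℕ) → (α β : PΓ) → (h : G.src α = G.rng β) →
    G.d α 0 = n → MorphIso (prodS G gr F h) (TGT G gr F h)
  | 0, α, β, h, hd =>
    transIso (zero_hv G hd h) rfl (zero_heq G gr F hd h).1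
      (Xs_congr G gr F (zero_hcomp G hd h).symm)
      (zero_heq G gr F hd h).2
      ((morS_congr G gr F (zero_hcomp G hd h).symm).trans
        (heq_castMor (gr := gr) _ _ _).symm)
      (unitL (morS G gr F β))
  | (n+1), α, β, h, hd =>
    transIso (fE_rng G hd) rfl (prodS_heq G gr F hd h).1
      (tgt_heq G gr F hd h).1 (prodS_heq G gr F hd h).2
      (tgt_heq G gr F hd h).2
      ((assocIso (F.mor (fE G hd))
          (leftCast gr (fE_src G hd).symm (morS G gr F (fQ G hd)))
          (leftCast gr (succ_h₂ G hd h).symm (morS G gr F β))).trans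
        (fibIso (MorphIso.refl (F.mor (fE G hd)))
          (transIso (fE_src G hd).symm rfl (M₂_heq G gr F hd h).1 rfl
            (M₂_heq G gr F hd h).2
            (heq_leftCast (gr := gr) (fE_src G hd).symm
              (TGT G gr F (succ_h₂ G hd h))).symm
            (TH n (fQ G hd) β (succ_h₂ G hd h) (fQ_deg G hd)))))

end Sys3

section ProjHeq

variable {l k : ℕ} {VΓ PΓ : Type}
  {ObjF PathF : VΓ → Type} {gr : ∀ v, KGraphStr k (ObjF v) (PathF v)}

theorem fib_proj_heq {a a' b b' c c' : VΓ} {X₁ X₁' X₂ X₂' : Type}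
    (ha : a = a') (hb : b = b') (hc : c = c') (h1 : X₁ = X₁') (h2 : X₂ = X₂')
    {M₁ : KMorph (gr a) (gr b) X₁} {M₁' : KMorph (gr a') (gr b') X₁'}
    {M₂ : KMorph (gr b) (gr c) X₂} {M₂' : KMorph (gr b') (gr c') X₂'}
    (hM₁ : HEq M₁ M₁') (hM₂ : HEq M₂ M₂')
    {u : FibCarrier M₁ M₂} {u' : FibCarrier M₁' M₂'} (hu : HEq u u') :
    HEq u.1.1 u'.1.1 ∧ HEq u.1.2 u'.1.2 := by
  subst ha; subst hb; subst hc; subst h1; subst h2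
  cases hM₁; cases hM₂; cases hu; exact ⟨HEq.rfl, HEq.rfl⟩

theorem fib_mk_heq {a a' b b' c c' : VΓ} {X₁ X₁' X₂ X₂' : Type}
    (ha : a = a') (hb : b = b') (hc : c = c') (h1 : X₁ = X₁') (h2 : X₂ = X₂')
    {M₁ : KMorph (gr a) (gr b) X₁} {M₁' : KMorph (gr a') (gr b') X₁'}
    {M₂ : KMorph (gr b) (gr c) X₂} {M₂' : KMorph (gr b') (gr c') X₂'}
    (hM₁ : HEq M₁ M₁') (hM₂ : HEq M₂ M₂')
    {x : X₁} {x' : X₁'} {y : X₂} {y' : X₂'}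
    (hx : HEq x x') (hy : HEq y y') (hp : M₁.s x = M₂.r y)
    (hp' : M₁'.s x' = M₂'.r y') :
    HEq (⟨(x, y), hp⟩ : FibCarrier M₁ M₂)
      (⟨(x', y'), hp'⟩ : FibCarrier M₁' M₂') := by
  subst ha; subst hb; subst hc; subst h1; subst h2
  cases hM₁; cases hM₂; cases hx; cases hy; rfl

theorem fib_eta {kk : ℕ} {O₀ P₀ O₁ P₁ O₂ P₂ X₁ X₂ : Type}
    {Λ₀ : KGraphStr kk O₀ P₀} {Λ₁ : KGraphStr kk O₁ P₁}
    {Λ₂ : KGraphStr kk O₂ P₂}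
    {M₁ : KMorph Λ₀ Λ₁ X₁} {M₂ : KMorph Λ₁ Λ₂ X₂} (u : FibCarrier M₁ M₂) :
    u = (⟨(u.1.1, u.1.2), u.2⟩ : FibCarrier M₁ M₂) := rfl

end ProjHeq

section Sys4
attribute [local instance] Classical.propDecidable

variable {k : ℕ} {VΓ PΓ : Type} (G : KGraphStr 1 VΓ PΓ)
  {ObjF PathF : VΓ → Type} (gr : ∀ v, KGraphStr k (ObjF v) (PathF v))
  (F : MkFunctorData G ObjF PathF gr)

theorem TH_congr {α α' β β' : PΓ} (hα : α = α') (hβ : β = β') {n n' : ℕ}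
    (hd : G.d α 0 = n) (hd' : G.d α' 0 = n')
    (h : G.src α = G.rng β) (h' : G.src α' = G.rng β')
    {p : FibCarrier (morS G gr F α) (leftCast gr h.symm (morS G gr F β))}
    {p' : FibCarrier (morS G gr F α') (leftCast gr h'.symm (morS G gr F β'))}
    (hp : HEq p p') :
    HEq ((TH G gr F n α β h hd).θ p) ((TH G gr F n' α' β' h' hd').θ p') := by
  subst hα; subst hβ; subst hd; subst hd'
  cases hp; rfl

theorem THθ_zero {α β : PΓ} (hd : G.d α 0 = 0) (h : G.src α = G.rng β)
    (p : FibCarrier (morS G gr F α) (leftCast gr h.symm (morS G gr F β))) :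
    HEq ((TH G gr F 0 α β h hd).θ p) p.1.2 := by
  show HEq ((transIso (zero_hv G hd h) rfl (zero_heq G gr F hd h).1
      (Xs_congr G gr F (zero_hcomp G hd h).symm)
      (zero_heq G gr F hd h).2
      ((morS_congr G gr F (zero_hcomp G hd h).symm).trans
        (heq_castMor (gr := gr) _ _ _).symm)
      (unitL (morS G gr F β))).θ p) p.1.2
  rw [transIso_θ]
  refine (cast_heq _ _).trans ?_
  show HEq ((cast (zero_heq G gr F hd h).1.symm p).1.2) p.1.2
  exact (fib_proj_heq (zero_hv G hd h) h.symm rfl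
    ((congrArg ObjF (zero_hv G hd h)).trans (Xs0 G gr F hd).symm) rfl
    (zero_hM₁ G gr F hd h)
    (heq_leftCast (gr := gr) h.symm (morS G gr F β)).symm
    (cast_heq _ p)).2

theorem THθ_succ {α β : PΓ} {n : ℕ} (hd : G.d α 0 = n + 1)
    (h : G.src α = G.rng β)
    (p : FibCarrier (morS G gr F α) (leftCast gr h.symm (morS G gr F β)))
    (z : FibCarrier (morS G gr F (fQ G hd))
      (leftCast gr (succ_h₂ G hd h).symm (morS G gr F β)))
    (hz1 : HEq z.1.1 (cast (XsS G gr F hd) p.1.1).1.2)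
    (hz2 : HEq z.1.2 p.1.2) :
    HEq ((cast (XsS G gr F (succ_hd' G hd h))
          ((TH G gr F (n+1) α β h hd).θ p)).1.1)
        (cast (XsS G gr F hd) p.1.1).1.1
    ∧ HEq ((cast (XsS G gr F (succ_hd' G hd h))
          ((TH G gr F (n+1) α β h hd).θ p)).1.2)
        ((TH G gr F n (fQ G hd) β (succ_h₂ G hd h) (fQ_deg G hd)).θ z) := by
  have e1 : (TH G gr F (n+1) α β h hd).θ p
      = cast (tgt_heq G gr F hd h).1
        (((assocIso (F.mor (fE G hd))
            (leftCast gr (fE_src G hd).symm (morS G gr F (fQ G hd)))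
            (leftCast gr (succ_h₂ G hd h).symm (morS G gr F β))).trans
          (fibIso (MorphIso.refl (F.mor (fE G hd)))
            (transIso (fE_src G hd).symm rfl (M₂_heq G gr F hd h).1 rfl
              (M₂_heq G gr F hd h).2
              (heq_leftCast (gr := gr) (fE_src G hd).symm
                (TGT G gr F (succ_h₂ G hd h))).symm
              (TH G gr F n (fQ G hd) β (succ_h₂ G hd h) (fQ_deg G hd))))).θ
          (cast (prodS_heq G gr F hd h).1.symm p)) :=
    transIso_θ (fE_rng G hd) rfl (prodS_heq G gr F hd h).1
      (tgt_heq G gr F hd h).1 (prodS_heq G gr F hd h).2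
      (tgt_heq G gr F hd h).2 _ p
  set P₁ := cast (prodS_heq G gr F hd h).1.symm p with hP₁def
  -- components of P₁ vs components of p
  have hP₁p : HEq P₁ p := cast_heq _ p
  have hproj1 := fib_proj_heq (fE_rng G hd) (fQ_src G hd) rfl
    (fibA_heq G gr F hd).1 rfl (fibA_heq G gr F hd).2
    ((heq_leftCast (gr := gr) _ _).trans
      (heq_leftCast (gr := gr) h.symm _).symm) hP₁p
  -- inner decomposition of P₁.1.1 against cast (XsS hd) p.1.1
  have hinner : HEq
      (leftCast gr (fE_src G hd).symm (MD G gr F n (fQ G hd) (fQ_deg G hd)).2)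
      (leftCast gr (fE_src G hd).symm (morS G gr F (fQ G hd))) :=
    ((heq_leftCast (gr := gr) _ _).trans
      (morS_heq G gr F (fQ_deg G hd)).symm).trans
      (heq_leftCast (gr := gr) _ _).symm
  have hcastp : HEq P₁.1.1 (cast (XsS G gr F hd) p.1.1) :=
    hproj1.1.trans (cast_heq _ _).symm
  have hproj2 := fib_proj_heq (gr := gr) rfl rfl rfl rfl
    (Xs_eq G gr F (fQ_deg G hd)).symm.symm
    (HEq.refl (F.mor (fE G hd))) hinner.symm hcastp
  -- the inner pair fed to j
  have hwz : HEq
      (⟨(P₁.1.1.1.2, P₁.1.2), P₁.2⟩ :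
        FibCarrier (leftCast gr (fE_src G hd).symm (morS G gr F (fQ G hd)))
          (leftCast gr (succ_h₂ G hd h).symm (morS G gr F β))) z := by
    exact fib_mk_heq (fE_src G hd) rfl rfl rfl rfl
      (heq_leftCast (gr := gr) _ _) (HEq.refl _)
      (hproj2.2.trans hz1.symm)
      (hproj1.2.trans hz2.symm) P₁.2 z.2
  -- compute the image element
  have hcw : cast (M₂_heq G gr F hd h).1.symm
      (⟨(P₁.1.1.1.2, P₁.1.2), P₁.2⟩ :
        FibCarrier (leftCast gr (fE_src G hd).symm (morS G gr F (fQ G hd)))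
          (leftCast gr (succ_h₂ G hd h).symm (morS G gr F β))) = z :=
    eq_of_heq ((cast_heq _ _).trans hwz)
  have e2 : (transIso (gr := gr) (fE_src G hd).symm rfl (M₂_heq G gr F hd h).1 rfl
      (M₂_heq G gr F hd h).2
      (heq_leftCast (gr := gr) (fE_src G hd).symm
        (TGT G gr F (succ_h₂ G hd h))).symm
      (TH G gr F n (fQ G hd) β (succ_h₂ G hd h) (fQ_deg G hd))).θ
        (⟨(P₁.1.1.1.2, P₁.1.2), P₁.2⟩ :
          FibCarrier (leftCast gr (fE_src G hd).symm (morS G gr F (fQ G hd)))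
            (leftCast gr (succ_h₂ G hd h).symm (morS G gr F β)))
      = (TH G gr F n (fQ G hd) β (succ_h₂ G hd h) (fQ_deg G hd)).θ z := by
    erw [transIso_θ, hcw]
    rfl
  have hTT : HEq (cast (XsS G gr F (succ_hd' G hd h))
      ((TH G gr F (n+1) α β h hd).θ p))
      (((assocIso (F.mor (fE G hd))
          (leftCast gr (fE_src G hd).symm (morS G gr F (fQ G hd)))
          (leftCast gr (succ_h₂ G hd h).symm (morS G gr F β))).trans
        (fibIso (MorphIso.refl (F.mor (fE G hd)))
          (transIso (fE_src G hd).symm rfl (M₂_heq G gr F hd h).1 rfl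
            (M₂_heq G gr F hd h).2
            (heq_leftCast (gr := gr) (fE_src G hd).symm
              (TGT G gr F (succ_h₂ G hd h))).symm
            (TH G gr F n (fQ G hd) β (succ_h₂ G hd h) (fQ_deg G hd))))).θ
        P₁) := by
    rw [e1]
    exact (cast_heq _ _).trans (cast_heq _ _)
  obtain ⟨he, hq⟩ := succ_uniq G hd h
  have hM₂' : HEq
      (leftCast gr (fE_src G hd).symm (TGT G gr F (succ_h₂ G hd h)))
      (leftCast gr (fE_src G (succ_hd' G hd h)).symm
        (MD G gr F (n + G.d β 0) (fQ G (succ_hd' G hd h))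
          (fQ_deg G (succ_hd' G hd h))).2) :=
    ((((heq_leftCast (gr := gr) _ _).trans (heq_castMor (gr := gr) _ _ _)).trans
      ((morS_congr G gr F hq).trans
        (morS_heq G gr F (fQ_deg G (succ_hd' G hd h))))).trans
      (heq_leftCast (gr := gr) _ _).symm)
  have hproj3 := fib_proj_heq (congrArg G.rng he) (congrArg G.src he)
    ((G.src_comp _ _ (succ_h₂ G hd h)).symm.trans (congrArg G.src hq))
    (FmorX_congr G gr F he)
    ((Xs_congr G gr F hq).trans (Xs_eq G gr F (fQ_deg G (succ_hd' G hd h))))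
    (Fmor_congr G gr F he) hM₂' hTT.symm
  constructor
  · exact hproj3.1.symm.trans hproj2.1
  · refine hproj3.2.symm.trans ?_
    exact heq_of_eq e2
end Sys4

section AppHeq

variable {l k : ℕ} {VΓ PΓ : Type}
  {ObjF PathF : VΓ → Type} {gr : ∀ v, KGraphStr k (ObjF v) (PathF v)}

theorem heq_s_app {a a' b b' : VΓ} (ha : a = a') (hb : b = b') {X X' : Type}
    (hX : X = X') {M : KMorph (gr a) (gr b) X} {M' : KMorph (gr a') (gr b') X'}
    (hM : HEq M M') {x : X} {x' : X'} (hx : HEq x x') :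
    HEq (M.s x) (M'.s x') := by
  subst ha; subst hb; subst hX; cases hM; cases hx; rfl

theorem heq_r_app {a a' b b' : VΓ} (ha : a = a') (hb : b = b') {X X' : Type}
    (hX : X = X') {M : KMorph (gr a) (gr b) X} {M' : KMorph (gr a') (gr b') X'}
    (hM : HEq M M') {x : X} {x' : X'} (hx : HEq x x') :
    HEq (M.r x) (M'.r x') := by
  subst ha; subst hb; subst hX; cases hM; cases hx; rfl

theorem idlike_s_gen {a b : VΓ} (e : a = b) {X : Type} (hX : X = ObjF a)
    {M : KMorph (gr a) (gr b) X}
    (hM : HEq M (rightCast gr e (idKMorph (gr a)))) (x : X) :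
    HEq (M.s x) x := by
  subst e; subst hX
  rw [eq_of_heq hM]
  rfl

theorem idlike_r_gen {a b : VΓ} (e : a = b) {X : Type} (hX : X = ObjF a)
    {M : KMorph (gr a) (gr b) X}
    (hM : HEq M (rightCast gr e (idKMorph (gr a)))) (x : X) :
    HEq (M.r x) x := by
  subst e; subst hX
  rw [eq_of_heq hM]
  rfl

theorem leftCast_r_heq {v w : VΓ} (h : v = w) {OΓ' PΓ' X : Type}
    {Γ' : KGraphStr k OΓ' PΓ'} (M : KMorph (gr v) Γ' X) (x : X) :
    HEq ((leftCast gr h M).r x) (M.r x) := by subst h; rfl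

theorem unit_id_gen {a b v : VΓ} (ha : a = v) (hb : b = v) (e : a = b)
    {X : Type} (hX : X = ObjF v) {M : KMorph (gr a) (gr b) X}
    (hM : HEq M (rightCast gr e (idKMorph (gr a)))) :
    IsIdMorph (carrierCast hX (castMor gr ha hb M)) := by
  subst ha; subst hb; subst hX
  rw [eq_of_heq hM]
  exact isIdMorph_idKMorph _

end AppHeq

section Sys5
attribute [local instance] Classical.propDecidable

variable {k : ℕ} {VΓ PΓ : Type} (G : KGraphStr 1 VΓ PΓ)
  {ObjF PathF : VΓ → Type} (gr : ∀ v, KGraphStr k (ObjF v) (PathF v))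
  (F : MkFunctorData G ObjF PathF gr)

theorem deg_ident (v : VΓ) : G.d (G.ident v) 0 = 0 := by
  rw [G.d_ident]; rfl

theorem sys_unit_type (v : VΓ) : Xs G gr F (G.ident v) = ObjF v :=
  (Xs0 G gr F (deg_ident G v)).trans (congrArg ObjF (G.rng_ident v))

theorem sys_unit_id (v : VΓ) :
    IsIdMorph (carrierCast (sys_unit_type G gr F v)
      (castMor gr (G.rng_ident v) (G.src_ident v) (morS G gr F (G.ident v)))) :=
  unit_id_gen (G.rng_ident v) (G.src_ident v)
    (rng_eq_src_of_deg0 G (deg_ident G v))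
    (sys_unit_type G gr F v) (morS0_heq G gr F (deg_ident G v))

theorem sys_th_unit_left (β : PΓ)
    (h : G.src (G.ident (G.rng β)) = G.rng β)
    (p : FibCarrier (morS G gr F (G.ident (G.rng β)))
      (leftCast gr h.symm (morS G gr F β))) :
    cast (congrArg (Xs G gr F) (G.ident_comp β))
      ((TH G gr F (G.d (G.ident (G.rng β)) 0) (G.ident (G.rng β)) β h rfl).θ p)
      = p.1.2 := by
  refine eq_of_heq (((cast_heq _ _).trans ?_))
  refine HEq.trans ?_ (THθ_zero G gr F (deg_ident G (G.rng β)) h p)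
  exact TH_congr G gr F rfl rfl rfl (deg_ident G (G.rng β)) h h HEq.rfl

end Sys5

section Sys6
attribute [local instance] Classical.propDecidable

variable {k : ℕ} {VΓ PΓ : Type} (G : KGraphStr 1 VΓ PΓ)
  {ObjF PathF : VΓ → Type} (gr : ∀ v, KGraphStr k (ObjF v) (PathF v))
  (F : MkFunctorData G ObjF PathF gr)

theorem unit_right_aux (n : ℕ) :
    ∀ (α β : PΓ) (hβ : β = G.ident (G.src α)) (hd : G.d α 0 = n)
      (h : G.src α = G.rng β)
      (p : FibCarrier (morS G gr F α) (leftCast gr h.symm (morS G gr F β))),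
      HEq ((TH G gr F n α β h hd).θ p) p.1.1 := by
  induction n with
  | zero =>
    intro α β hβ hd h p
    have degβ : G.d β 0 = 0 := by rw [hβ]; exact deg_ident G _
    refine (THθ_zero G gr F hd h p).trans ?_
    have e1 : HEq ((morS G gr F α).s p.1.1) p.1.1 :=
      idlike_s_gen (rng_eq_src_of_deg0 G hd) (Xs0 G gr F hd)
        (morS0_heq G gr F hd) p.1.1
    have e2 : HEq ((leftCast gr h.symm (morS G gr F β)).r p.1.2)
        ((morS G gr F β).r p.1.2) := leftCast_r_heq h.symm _ p.1.2
    have e3 : HEq ((morS G gr F β).r p.1.2) p.1.2 :=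
      idlike_r_gen (rng_eq_src_of_deg0 G degβ) (Xs0 G gr F degβ)
        (morS0_heq G gr F degβ) p.1.2
    exact ((e3.symm.trans e2.symm).trans (heq_of_eq p.2).symm).trans e1
  | succ n ih =>
    intro α β hβ hd h p
    have h₂ := succ_h₂ G hd h
    have hd' := succ_hd' G hd h
    -- the inner element z
    have hsz : HEq ((morS G gr F (fQ G hd)).s
        (cast (Xs_eq G gr F (fQ_deg G hd)).symm
          ((cast (XsS G gr F hd) p.1.1).1.2)))
        ((leftCast gr (succ_h₂ G hd h).symm (morS G gr F β)).r p.1.2) := by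
      refine (heq_s_app (gr := gr) rfl rfl (Xs_eq G gr F (fQ_deg G hd))
        (morS_heq G gr F (fQ_deg G hd)) (cast_heq _ _)).trans ?_
      refine (heq_s_app (gr := gr) (fE_src G hd).symm rfl rfl
        (heq_leftCast (gr := gr) (fE_src G hd).symm _).symm
        (HEq.refl _)).trans ?_
      refine HEq.trans (b := (castMor gr (fE_rng G hd) (fQ_src G hd)
          (fibKMorph (F.mor (fE G hd)) (leftCast gr (fE_src G hd).symm
            (MD G gr F n (fQ G hd) (fQ_deg G hd)).2))).s
          (cast (XsS G gr F hd) p.1.1)) ?_ ?_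
      · exact heq_s_app (gr := gr) (fE_rng G hd) (fQ_src G hd) rfl
          (M := fibKMorph (F.mor (fE G hd)) (leftCast gr (fE_src G hd).symm
            (MD G gr F n (fQ G hd) (fQ_deg G hd)).2))
          (heq_castMor (gr := gr) _ _ _).symm
          (HEq.refl (cast (XsS G gr F hd) p.1.1))
      refine (heq_s_app (gr := gr) rfl rfl (XsS G gr F hd).symm
        (morSS_heq G gr F hd).symm (cast_heq _ _)).trans ?_
      refine (heq_of_eq p.2).trans ?_
      exact (leftCast_r_heq h.symm _ p.1.2).trans
        (leftCast_r_heq (succ_h₂ G hd h).symm _ p.1.2).symm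
    set z : FibCarrier (morS G gr F (fQ G hd))
        (leftCast gr (succ_h₂ G hd h).symm (morS G gr F β)) :=
      ⟨(cast (Xs_eq G gr F (fQ_deg G hd)).symm
          ((cast (XsS G gr F hd) p.1.1).1.2), p.1.2), eq_of_heq hsz⟩ with hzdef
    obtain ⟨c1, c2⟩ := THθ_succ G gr F hd h p z (cast_heq _ _) (HEq.refl _)
    have hβ' : β = G.ident (G.src (fQ G hd)) :=
      hβ.trans (congrArg G.ident (fQ_src G hd).symm)
    have ihz := ih (fQ G hd) β hβ' (fQ_deg G hd) h₂ z
    -- identify q'' with q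
    obtain ⟨he, hq⟩ := succ_uniq G hd h
    have hqq : G.comp (fQ G hd) β = fQ G hd := by
      rw [hβ', G.comp_ident]
    have hq' : fQ G (succ_hd' G hd h) = fQ G hd := hq.symm.trans hqq
    -- assemble
    have hM₂'' : HEq
        (leftCast gr (fE_src G (succ_hd' G hd h)).symm
          (MD G gr F (n + G.d β 0) (fQ G (succ_hd' G hd h))
            (fQ_deg G (succ_hd' G hd h))).2)
        (leftCast gr (fE_src G hd).symm
          (MD G gr F n (fQ G hd) (fQ_deg G hd)).2) :=
      (((heq_leftCast (gr := gr) _ _).trans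
        (morS_heq G gr F (fQ_deg G (succ_hd' G hd h))).symm).trans
        ((morS_congr G gr F hq').trans
          (morS_heq G gr F (fQ_deg G hd)))).trans
        (heq_leftCast (gr := gr) _ _).symm
    have hout : HEq (cast (XsS G gr F (succ_hd' G hd h))
        ((TH G gr F (n+1) α β h hd).θ p)) (cast (XsS G gr F hd) p.1.1) := by
      conv_lhs => rw [fib_eta (cast (XsS G gr F (succ_hd' G hd h))
        ((TH G gr F (n+1) α β h hd).θ p))]
      conv_rhs => rw [fib_eta (cast (XsS G gr F hd) p.1.1)]
      exact fib_mk_heq (congrArg G.rng he.symm) (congrArg G.src he.symm)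
        (congrArg G.src hq') (FmorX_congr G gr F he.symm)
        ((Xs_eq G gr F (fQ_deg G (succ_hd' G hd h))).symm.trans
          ((Xs_congr G gr F hq').trans (Xs_eq G gr F (fQ_deg G hd))))
        (Fmor_congr G gr F he.symm) hM₂''
        c1 (c2.trans (ihz.trans (cast_heq _ _))) _ _
    exact ((cast_heq (XsS G gr F (succ_hd' G hd h)) _).symm.trans hout).trans
      (cast_heq (XsS G gr F hd) p.1.1)

theorem sys_th_unit_right (α : PΓ)
    (h : G.src α = G.rng (G.ident (G.src α)))
    (p : FibCarrier (morS G gr F α)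
      (leftCast gr h.symm (morS G gr F (G.ident (G.src α))))) :
    cast (congrArg (Xs G gr F) (G.comp_ident α))
      ((TH G gr F (G.d α 0) α (G.ident (G.src α)) h rfl).θ p) = p.1.1 :=
  eq_of_heq ((cast_heq _ _).trans
    (unit_right_aux G gr F (G.d α 0) α (G.ident (G.src α)) rfl rfl h p))

end Sys6

section Sys7
attribute [local instance] Classical.propDecidable

variable {k : ℕ} {VΓ PΓ : Type} (G : KGraphStr 1 VΓ PΓ)
  {ObjF PathF : VΓ → Type} (gr : ∀ v, KGraphStr k (ObjF v) (PathF v))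
  (F : MkFunctorData G ObjF PathF gr)

theorem z_prop {α β : PΓ} {n : ℕ} (hd : G.d α 0 = n + 1)
    (h : G.src α = G.rng β)
    (p : FibCarrier (morS G gr F α) (leftCast gr h.symm (morS G gr F β))) :
    (morS G gr F (fQ G hd)).s (cast (Xs_eq G gr F (fQ_deg G hd)).symm
        ((cast (XsS G gr F hd) p.1.1).1.2))
      = (leftCast gr (succ_h₂ G hd h).symm (morS G gr F β)).r p.1.2 := by
  refine eq_of_heq ?_
  refine (heq_s_app (gr := gr) rfl rfl (Xs_eq G gr F (fQ_deg G hd))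
    (morS_heq G gr F (fQ_deg G hd)) (cast_heq _ _)).trans ?_
  refine (heq_s_app (gr := gr) (fE_src G hd).symm rfl rfl
    (heq_leftCast (gr := gr) (fE_src G hd).symm _).symm
    (HEq.refl _)).trans ?_
  refine HEq.trans (b := (castMor gr (fE_rng G hd) (fQ_src G hd)
      (fibKMorph (F.mor (fE G hd)) (leftCast gr (fE_src G hd).symm
        (MD G gr F n (fQ G hd) (fQ_deg G hd)).2))).s
      (cast (XsS G gr F hd) p.1.1)) ?_ ?_
  · exact heq_s_app (gr := gr) (fE_rng G hd) (fQ_src G hd) rfl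
      (M := fibKMorph (F.mor (fE G hd)) (leftCast gr (fE_src G hd).symm
        (MD G gr F n (fQ G hd) (fQ_deg G hd)).2))
      (heq_castMor (gr := gr) _ _ _).symm
      (HEq.refl (cast (XsS G gr F hd) p.1.1))
  refine (heq_s_app (gr := gr) rfl rfl (XsS G gr F hd).symm
    (morSS_heq G gr F hd).symm (cast_heq _ _)).trans ?_
  refine (heq_of_eq p.2).trans ?_
  exact (leftCast_r_heq h.symm _ p.1.2).trans
    (leftCast_r_heq (succ_h₂ G hd h).symm _ p.1.2).symm

noncomputable def zOf {α β : PΓ} {n : ℕ} (hd : G.d α 0 = n + 1)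
    (h : G.src α = G.rng β)
    (p : FibCarrier (morS G gr F α) (leftCast gr h.symm (morS G gr F β))) :
    FibCarrier (morS G gr F (fQ G hd))
      (leftCast gr (succ_h₂ G hd h).symm (morS G gr F β)) :=
  ⟨(cast (Xs_eq G gr F (fQ_deg G hd)).symm
      ((cast (XsS G gr F hd) p.1.1).1.2), p.1.2), z_prop G gr F hd h p⟩

theorem THθ_succ2 {α β : PΓ} {n : ℕ} (hd : G.d α 0 = n + 1)
    (h : G.src α = G.rng β)
    (p : FibCarrier (morS G gr F α) (leftCast gr h.symm (morS G gr F β))) :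
    HEq ((cast (XsS G gr F (succ_hd' G hd h))
          ((TH G gr F (n+1) α β h hd).θ p)).1.1)
        (cast (XsS G gr F hd) p.1.1).1.1
    ∧ HEq ((cast (XsS G gr F (succ_hd' G hd h))
          ((TH G gr F (n+1) α β h hd).θ p)).1.2)
        ((TH G gr F n (fQ G hd) β (succ_h₂ G hd h) (fQ_deg G hd)).θ
          (zOf G gr F hd h p)) :=
  THθ_succ G gr F hd h p (zOf G gr F hd h p) (cast_heq _ _) (HEq.refl _)

end Sys7

section Sys8
attribute [local instance] Classical.propDecidable

variable {k : ℕ} {VΓ PΓ : Type} (G : KGraphStr 1 VΓ PΓ)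
  {ObjF PathF : VΓ → Type} (gr : ∀ v, KGraphStr k (ObjF v) (PathF v))
  (F : MkFunctorData G ObjF PathF gr)

theorem assoc_aux (n : ℕ) :
    ∀ (α β γ : PΓ) (h₁ : G.src α = G.rng β) (h₂ : G.src β = G.rng γ)
      (h₃ : G.src (G.comp α β) = G.rng γ)
      (h₄ : G.src α = G.rng (G.comp β γ))
      (hd : G.d α 0 = n) (n12 : ℕ) (hd12 : G.d (G.comp α β) 0 = n12)
      (x₁ : Xs G gr F α) (x₂ : Xs G gr F β) (x₃ : Xs G gr F γ)
      (hx₁₂ : (morS G gr F α).s x₁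
        = (leftCast gr h₁.symm (morS G gr F β)).r x₂)
      (hL : (morS G gr F (G.comp α β)).s
          ((TH G gr F n α β h₁ hd).θ ⟨(x₁, x₂), hx₁₂⟩)
          = (leftCast gr h₃.symm (morS G gr F γ)).r x₃)
      (hx₂₃ : (morS G gr F β).s x₂
        = (leftCast gr h₂.symm (morS G gr F γ)).r x₃)
      (hR : (morS G gr F α).s x₁ = (leftCast gr h₄.symm
          (morS G gr F (G.comp β γ))).r
          ((TH G gr F (G.d β 0) β γ h₂ rfl).θ ⟨(x₂, x₃), hx₂₃⟩)),
      HEq ((TH G gr F n12 (G.comp α β) γ h₃ hd12).θ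
          ⟨((TH G gr F n α β h₁ hd).θ ⟨(x₁, x₂), hx₁₂⟩, x₃), hL⟩)
        ((TH G gr F n α (G.comp β γ) h₄ hd).θ
          ⟨(x₁, (TH G gr F (G.d β 0) β γ h₂ rfl).θ ⟨(x₂, x₃), hx₂₃⟩), hR⟩) := by
  induction n with
  | zero =>
    intro α β γ h₁ h₂ h₃ h₄ hd n12 hd12 x₁ x₂ x₃ hx₁₂ hL hx₂₃ hR
    have hc : G.comp α β = β := zero_hcomp G hd h₁
    have hlhs : HEq ((TH G gr F n12 (G.comp α β) γ h₃ hd12).θ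
        ⟨((TH G gr F 0 α β h₁ hd).θ ⟨(x₁, x₂), hx₁₂⟩, x₃), hL⟩)
        ((TH G gr F (G.d β 0) β γ h₂ rfl).θ ⟨(x₂, x₃), hx₂₃⟩) := by
      refine TH_congr G gr F hc rfl hd12 rfl h₃ h₂ ?_
      exact fib_mk_heq (congrArg G.rng hc) (congrArg G.src hc) rfl
        (Xs_congr G gr F hc) rfl (morS_congr G gr F hc)
        ((heq_leftCast (gr := gr) h₃.symm _).trans
          (heq_leftCast (gr := gr) h₂.symm _).symm)
        (THθ_zero G gr F hd h₁ ⟨(x₁, x₂), hx₁₂⟩) (HEq.refl x₃) hL hx₂₃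
    exact hlhs.trans (THθ_zero G gr F hd h₄
      ⟨(x₁, (TH G gr F (G.d β 0) β γ h₂ rfl).θ ⟨(x₂, x₃), hx₂₃⟩), hR⟩).symm
  | succ n ih =>
    intro α β γ h₁ h₂ h₃ h₄ hd n12 hd12 x₁ x₂ x₃ hx₁₂ hL hx₂₃ hR
    obtain ⟨c1, c2⟩ := THθ_succ2 G gr F hd h₁ ⟨(x₁, x₂), hx₁₂⟩
    obtain ⟨D1, D2⟩ := THθ_succ2 G gr F hd h₄
      ⟨(x₁, (TH G gr F (G.d β 0) β γ h₂ rfl).θ ⟨(x₂, x₃), hx₂₃⟩), hR⟩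
    have hd12' := succ_hd' G hd h₁
    have hstep1 : HEq ((TH G gr F n12 (G.comp α β) γ h₃ hd12).θ
        ⟨((TH G gr F (n+1) α β h₁ hd).θ ⟨(x₁, x₂), hx₁₂⟩, x₃), hL⟩)
        ((TH G gr F ((n + G.d β 0) + 1) (G.comp α β) γ h₃ hd12').θ
        ⟨((TH G gr F (n+1) α β h₁ hd).θ ⟨(x₁, x₂), hx₁₂⟩, x₃), hL⟩) :=
      TH_congr G gr F rfl rfl hd12 hd12' h₃ h₃ HEq.rfl
    obtain ⟨C1, C2⟩ := THθ_succ2 G gr F hd12' h₃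
      ⟨((TH G gr F (n+1) α β h₁ hd).θ ⟨(x₁, x₂), hx₁₂⟩, x₃), hL⟩
    obtain ⟨he, hq⟩ := succ_uniq G hd h₁
    have hzp1 : HEq ((zOf G gr F hd12' h₃
        ⟨((TH G gr F (n+1) α β h₁ hd).θ ⟨(x₁, x₂), hx₁₂⟩, x₃), hL⟩).1.1)
        ((TH G gr F n (fQ G hd) β (succ_h₂ G hd h₁) (fQ_deg G hd)).θ
          (zOf G gr F hd h₁ ⟨(x₁, x₂), hx₁₂⟩)) :=
      (cast_heq _ _).trans c2
    have h₃' : G.src (G.comp (fQ G hd) β) = G.rng γ :=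
      (congrArg G.src hq).trans (succ_h₂ G hd12' h₃)
    have hdqβ : G.d (G.comp (fQ G hd) β) 0 = n + G.d β 0 := by
      rw [deg_comp G (succ_h₂ G hd h₁), fQ_deg G hd]
    have pf'' : (morS G gr F (G.comp (fQ G hd) β)).s
        ((TH G gr F n (fQ G hd) β (succ_h₂ G hd h₁) (fQ_deg G hd)).θ
          (zOf G gr F hd h₁ ⟨(x₁, x₂), hx₁₂⟩))
        = (leftCast gr h₃'.symm (morS G gr F γ)).r x₃ := by
      refine eq_of_heq ?_
      refine (heq_s_app (gr := gr) (congrArg G.rng hq) (congrArg G.src hq)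
        (Xs_congr G gr F hq) (morS_congr G gr F hq) hzp1.symm).trans ?_
      refine (heq_of_eq (zOf G gr F hd12' h₃
        ⟨((TH G gr F (n+1) α β h₁ hd).θ ⟨(x₁, x₂), hx₁₂⟩, x₃), hL⟩).2).trans ?_
      exact (leftCast_r_heq _ _ x₃).trans (leftCast_r_heq _ _ x₃).symm
    have hstep4 : HEq ((TH G gr F (n + G.d β 0) (fQ G hd12') γ
        (succ_h₂ G hd12' h₃) (fQ_deg G hd12')).θ
          (zOf G gr F hd12' h₃
            ⟨((TH G gr F (n+1) α β h₁ hd).θ ⟨(x₁, x₂), hx₁₂⟩, x₃), hL⟩))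
        ((TH G gr F (n + G.d β 0) (G.comp (fQ G hd) β) γ h₃' hdqβ).θ
          ⟨((TH G gr F n (fQ G hd) β (succ_h₂ G hd h₁) (fQ_deg G hd)).θ
            (zOf G gr F hd h₁ ⟨(x₁, x₂), hx₁₂⟩), x₃), pf''⟩) := by
      refine TH_congr G gr F hq.symm rfl (fQ_deg G hd12') hdqβ _ _ ?_
      exact fib_mk_heq (congrArg G.rng hq.symm) (congrArg G.src hq.symm) rfl
        (Xs_congr G gr F hq.symm) rfl (morS_congr G gr F hq.symm)
        ((heq_leftCast (gr := gr) _ _).trans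
          (heq_leftCast (gr := gr) _ _).symm)
        hzp1 (HEq.refl x₃) _ _
    have ihh := ih (fQ G hd) β γ (succ_h₂ G hd h₁) h₂ h₃' (succ_h₂ G hd h₄)
      (fQ_deg G hd) (n + G.d β 0) hdqβ
      (cast (Xs_eq G gr F (fQ_deg G hd)).symm
        ((cast (XsS G gr F hd) x₁).1.2)) x₂ x₃
      (zOf G gr F hd h₁ ⟨(x₁, x₂), hx₁₂⟩).2 pf'' hx₂₃
      (zOf G gr F hd h₄
        ⟨(x₁, (TH G gr F (G.d β 0) β γ h₂ rfl).θ ⟨(x₂, x₃), hx₂₃⟩), hR⟩).2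
    obtain ⟨he3, hq3⟩ := succ_uniq G hd12' h₃
    obtain ⟨he4, hq4⟩ := succ_uniq G hd h₄
    have heEq : fE G (succ_hd' G hd12' h₃) = fE G (succ_hd' G hd h₄) :=
      he3.symm.trans (he.symm.trans he4)
    have hqEq : fQ G (succ_hd' G hd12' h₃) = fQ G (succ_hd' G hd h₄) := by
      refine hq3.symm.trans ?_
      refine (congrArg (fun t => G.comp t γ) hq.symm).trans ?_
      refine (G.comp_assoc (fQ G hd) β γ (succ_h₂ G hd h₁) h₂).trans ?_
      exact hq4
    have hM₂f : HEq
        (leftCast gr (fE_src G (succ_hd' G hd12' h₃)).symm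
          (MD G gr F ((n + G.d β 0) + G.d γ 0) (fQ G (succ_hd' G hd12' h₃))
            (fQ_deg G (succ_hd' G hd12' h₃))).2)
        (leftCast gr (fE_src G (succ_hd' G hd h₄)).symm
          (MD G gr F (n + G.d (G.comp β γ) 0) (fQ G (succ_hd' G hd h₄))
            (fQ_deg G (succ_hd' G hd h₄))).2) :=
      (((heq_leftCast (gr := gr) _ _).trans
        (morS_heq G gr F (fQ_deg G (succ_hd' G hd12' h₃))).symm).trans
        ((morS_congr G gr F hqEq).trans
          (morS_heq G gr F (fQ_deg G (succ_hd' G hd h₄))))).trans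
        (heq_leftCast (gr := gr) _ _).symm
    have final : HEq
        (cast (XsS G gr F (succ_hd' G hd12' h₃))
          ((TH G gr F ((n + G.d β 0) + 1) (G.comp α β) γ h₃ hd12').θ
            ⟨((TH G gr F (n+1) α β h₁ hd).θ ⟨(x₁, x₂), hx₁₂⟩, x₃), hL⟩))
        (cast (XsS G gr F (succ_hd' G hd h₄))
          ((TH G gr F (n+1) α (G.comp β γ) h₄ hd).θ
            ⟨(x₁, (TH G gr F (G.d β 0) β γ h₂ rfl).θ ⟨(x₂, x₃), hx₂₃⟩),
              hR⟩)) := by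
      conv_lhs => rw [fib_eta (cast (XsS G gr F (succ_hd' G hd12' h₃))
        ((TH G gr F ((n + G.d β 0) + 1) (G.comp α β) γ h₃ hd12').θ
          ⟨((TH G gr F (n+1) α β h₁ hd).θ ⟨(x₁, x₂), hx₁₂⟩, x₃), hL⟩))]
      conv_rhs => rw [fib_eta (cast (XsS G gr F (succ_hd' G hd h₄))
        ((TH G gr F (n+1) α (G.comp β γ) h₄ hd).θ
          ⟨(x₁, (TH G gr F (G.d β 0) β γ h₂ rfl).θ ⟨(x₂, x₃), hx₂₃⟩), hR⟩))]
      exact fib_mk_heq (congrArg G.rng heEq) (congrArg G.src heEq)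
        (congrArg G.src hqEq) (FmorX_congr G gr F heEq)
        ((Xs_eq G gr F (fQ_deg G (succ_hd' G hd12' h₃))).symm.trans
          ((Xs_congr G gr F hqEq).trans
            (Xs_eq G gr F (fQ_deg G (succ_hd' G hd h₄)))))
        (Fmor_congr G gr F heEq) hM₂f
        (C1.trans (c1.trans D1.symm))
        (C2.trans ((hstep4.trans ihh).trans D2.symm)) _ _
    refine hstep1.trans ?_
    exact ((cast_heq _ _).symm.trans final).trans (cast_heq _ _)

end Sys8

section Sys9
attribute [local instance] Classical.propDecidable

variable {k : ℕ} {VΓ PΓ : Type} (G : KGraphStr 1 VΓ PΓ)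
  {ObjF PathF : VΓ → Type} (gr : ∀ v, KGraphStr k (ObjF v) (PathF v))
  (F : MkFunctorData G ObjF PathF gr)

/-- The canonical `Γ`-system constructed from the functor data. -/
noncomputable def sys0 : GammaSystem G ObjF PathF gr where
  X := Xs G gr F
  mor := morS G gr F
  prod := fun {α β} h => prodS G gr F h
  prod_spec := fun {α β} h => isFibProd_fibKMorph _ _
  th := fun {α β} h => TH G gr F (G.d α 0) α β h rfl
  unit_type := sys_unit_type G gr F
  unit_id := sys_unit_id G gr F
  th_unit_left := sys_th_unit_left G gr F
  th_unit_right := sys_th_unit_right G gr F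
  th_assoc α β γ h₁ h₂ h₃ h₄ x₁ x₂ x₃ hx₁₂ hL hx₂₃ hR :=
    eq_of_heq ((cast_heq _ _).trans
      (assoc_aux G gr F (G.d α 0) α β γ h₁ h₂ h₃ h₄ rfl
        (G.d (G.comp α β) 0) rfl x₁ x₂ x₃ hx₁₂ hL hx₂₃ hR))

theorem morS_iso_F (n : ℕ) :
    ∀ γ : PΓ, G.d γ 0 = n →
      Nonempty (MorphIso (morS G gr F γ) (F.mor γ)) := by
  induction n with
  | zero =>
    intro γ hd
    obtain ⟨I, hI, ⟨j⟩⟩ := F.unit (G.rng γ)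
    have iso1 : MorphIso (idKMorph (gr (G.rng γ))) I :=
      isoOfIsIdMorph (isIdMorph_idKMorph _) hI
    have hM : HEq (idKMorph (gr (G.rng γ))) (morS G gr F γ) :=
      ((morS0_heq G gr F hd).trans (heq_rightCast (gr := gr) _ _)).symm
    have hN : HEq (castMor gr (G.rng_ident (G.rng γ)) (G.src_ident (G.rng γ))
        (F.mor (G.ident (G.rng γ)))) (F.mor γ) :=
      (heq_castMor (gr := gr) _ _ _).trans
        (Fmor_congr G gr F (eq_ident_of_deg0 G hd).symm)
    exact ⟨transIso rfl (rng_eq_src_of_deg0 G hd) (Xs0 G gr F hd).symm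
      ((FmorX_congr G gr F (eq_ident_of_deg0 G hd)).symm)
      hM hN (iso1.trans j.symm)⟩
  | succ n ih =>
    intro γ hd
    obtain ⟨iq⟩ := ih (fQ G hd) (fQ_deg G hd)
    have i1 : MorphIso
        (fibKMorph (F.mor (fE G hd))
          (leftCast gr (fE_src G hd).symm (morS G gr F (fQ G hd))))
        (fibKMorph (F.mor (fE G hd))
          (leftCast gr (fE_src G hd).symm (F.mor (fQ G hd)))) :=
      fibIso (MorphIso.refl _) (leftCast_iso gr (fE_src G hd).symm iq)
    obtain ⟨ic⟩ := F.compat (fE_src G hd)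
      (fibKMorph (F.mor (fE G hd))
        (leftCast gr (fE_src G hd).symm (F.mor (fQ G hd))))
      (isFibProd_fibKMorph _ _)
    have hN : HEq (castMor gr (G.rng_comp (fE G hd) (fQ G hd) (fE_src G hd))
        (G.src_comp (fE G hd) (fQ G hd) (fE_src G hd))
        (F.mor (G.comp (fE G hd) (fQ G hd)))) (F.mor γ) :=
      (heq_castMor (gr := gr) _ _ _).trans (Fmor_congr G gr F (fE_comp G hd))
    exact ⟨transIso (fE_rng G hd) (fQ_src G hd) (fibA_heq G gr F hd).1
      (FmorX_congr G gr F (fE_comp G hd)) (fibA_heq G gr F hd).2 hN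
      (i1.trans ic)⟩

theorem sys0_induces (γ : PΓ) :
    Nonempty (MorphIso ((sys0 G gr F).mor γ) (F.mor γ)) :=
  morS_iso_F G gr F (G.d γ 0) γ rfl

end Sys9

section Uniq
attribute [local instance] Classical.propDecidable

variable {k : ℕ} {VΓ PΓ : Type} (G : KGraphStr 1 VΓ PΓ)
  {ObjF PathF : VΓ → Type} (gr : ∀ v, KGraphStr k (ObjF v) (PathF v))
  (F : MkFunctorData G ObjF PathF gr)
  (S₁ S₂ : GammaSystem G ObjF PathF gr)
  (j₁ : ∀ γ : PΓ, MorphIso (S₁.mor γ) (F.mor γ))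
  (j₂ : ∀ γ : PΓ, MorphIso (S₂.mor γ) (F.mor γ))

theorem sysX_congr (S : GammaSystem G ObjF PathF gr) {γ γ' : PΓ}
    (h : γ = γ') : S.X γ = S.X γ' := by subst h; rfl

theorem sysmor_congr (S : GammaSystem G ObjF PathF gr) {γ γ' : PΓ}
    (h : γ = γ') : HEq (S.mor γ) (S.mor γ') := by subst h; rfl

theorem systh_congr (S : GammaSystem G ObjF PathF gr) {α α' β β' : PΓ}
    (hα : α = α') (hβ : β = β') (h : G.src α = G.rng β)
    (h' : G.src α' = G.rng β')
    {p : FibCarrier (S.mor α) (leftCast gr h.symm (S.mor β))}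
    {p' : FibCarrier (S.mor α') (leftCast gr h'.symm (S.mor β'))}
    (hp : HEq p p') : HEq ((S.th h).θ p) ((S.th h').θ p') := by
  subst hα; subst hβ
  cases hp; rfl

theorem leftCast_s_eq {v w : VΓ} (h : v = w) {OΓ' PΓ' X : Type}
    {Γ' : KGraphStr k OΓ' PΓ'} (M : KMorph (gr v) Γ' X) (x : X) :
    (leftCast gr h M).s x = M.s x := by subst h; rfl

theorem castMor_s_heq {v v' w w' : VΓ} (hv : v = v') (hw : w = w')
    {X : Type} (M : KMorph (gr v) (gr w) X) (x : X) :
    HEq ((castMor gr hv hw M).s x) (M.s x) := by subst hv; subst hw; rfl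

theorem castMor_r_heq {v v' w w' : VΓ} (hv : v = v') (hw : w = w')
    {X : Type} (M : KMorph (gr v) (gr w) X) (x : X) :
    HEq ((castMor gr hv hw M).r x) (M.r x) := by subst hv; subst hw; rfl

/-- Edge-level comparison isomorphism. -/
noncomputable def edgeI (γ : PΓ) : MorphIso (S₁.mor γ) (S₂.mor γ) :=
  (j₁ γ).trans (j₂ γ).symm

/-- The comparison family between two systems inducing the same functor. -/
noncomputable def EE : (n : ℕ) → (γ : PΓ) → G.d γ 0 = n →
    MorphIso (S₁.mor γ) (S₂.mor γ)
  | 0, γ, hd =>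
    transIso rfl (rng_eq_src_of_deg0 G hd)
      ((S₁.unit_type (G.rng γ)).symm.trans
        (sysX_congr G gr S₁ (eq_ident_of_deg0 G hd).symm))
      ((S₂.unit_type (G.rng γ)).symm.trans
        (sysX_congr G gr S₂ (eq_ident_of_deg0 G hd).symm))
      ((heq_carrierCast _ _).trans
        ((heq_castMor (gr := gr) _ _ _).trans
          (sysmor_congr G gr S₁ (eq_ident_of_deg0 G hd).symm)))
      ((heq_carrierCast _ _).trans
        ((heq_castMor (gr := gr) _ _ _).trans
          (sysmor_congr G gr S₂ (eq_ident_of_deg0 G hd).symm)))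
      (isoOfIsIdMorph (S₁.unit_id (G.rng γ)) (S₂.unit_id (G.rng γ)))
  | (n+1), γ, hd =>
    transIso (fE_rng G hd) (fQ_src G hd)
      (sysX_congr G gr S₁ (fE_comp G hd))
      (sysX_congr G gr S₂ (fE_comp G hd))
      ((heq_castMor (gr := gr) _ _ _).trans
        (sysmor_congr G gr S₁ (fE_comp G hd)))
      ((heq_castMor (gr := gr) _ _ _).trans
        (sysmor_congr G gr S₂ (fE_comp G hd)))
      ((S₁.th (fE_src G hd)).symm.trans
        ((isoOfFibProd (S₁.prod_spec (fE_src G hd))).trans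
          ((fibIso (edgeI G gr F S₁ S₂ j₁ j₂ (fE G hd))
            (leftCast_iso gr (fE_src G hd).symm
              (EE n (fQ G hd) (fQ_deg G hd)))).trans
            ((isoOfFibProd (S₂.prod_spec (fE_src G hd))).symm.trans
              (S₂.th (fE_src G hd))))))

theorem EE_congr {γ γ' : PΓ} (h : γ = γ') {n n' : ℕ} (hd : G.d γ 0 = n)
    (hd' : G.d γ' 0 = n') {x : S₁.X γ} {x' : S₁.X γ'} (hx : HEq x x') :
    HEq ((EE G gr F S₁ S₂ j₁ j₂ n γ hd).θ x)
      ((EE G gr F S₁ S₂ j₁ j₂ n' γ' hd').θ x') := by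
  subst h; subst hd; subst hd'
  cases hx; rfl

end Uniq

section Uniq2
attribute [local instance] Classical.propDecidable

variable {k : ℕ} {VΓ PΓ : Type} (G : KGraphStr 1 VΓ PΓ)
  {ObjF PathF : VΓ → Type} (gr : ∀ v, KGraphStr k (ObjF v) (PathF v))
  (F : MkFunctorData G ObjF PathF gr)
  (S₁ S₂ : GammaSystem G ObjF PathF gr)
  (j₁ : ∀ γ : PΓ, MorphIso (S₁.mor γ) (F.mor γ))
  (j₂ : ∀ γ : PΓ, MorphIso (S₂.mor γ) (F.mor γ))

theorem V_prop {γ : PΓ} {n : ℕ} (hd : G.d γ 0 = n + 1)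
    (w : FibCarrier (S₁.mor (fE G hd))
      (leftCast gr (fE_src G hd).symm (S₁.mor (fQ G hd)))) :
    (S₂.mor (fE G hd)).s ((edgeI G gr F S₁ S₂ j₁ j₂ (fE G hd)).θ w.1.1)
      = (leftCast gr (fE_src G hd).symm (S₂.mor (fQ G hd))).r
        ((EE G gr F S₁ S₂ j₁ j₂ n (fQ G hd) (fQ_deg G hd)).θ w.1.2) := by
  refine eq_of_heq ?_
  refine (heq_of_eq ((edgeI G gr F S₁ S₂ j₁ j₂ (fE G hd)).s_θ w.1.1)).trans ?_
  refine (heq_of_eq w.2).trans ?_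
  refine (leftCast_r_heq (fE_src G hd).symm _ w.1.2).trans ?_
  refine HEq.trans (heq_of_eq
    ((EE G gr F S₁ S₂ j₁ j₂ n (fQ G hd) (fQ_deg G hd)).r_θ w.1.2).symm) ?_
  exact (leftCast_r_heq (fE_src G hd).symm _ _).symm

noncomputable def VOf {γ : PΓ} {n : ℕ} (hd : G.d γ 0 = n + 1)
    (w : FibCarrier (S₁.mor (fE G hd))
      (leftCast gr (fE_src G hd).symm (S₁.mor (fQ G hd)))) :
    FibCarrier (S₂.mor (fE G hd))
      (leftCast gr (fE_src G hd).symm (S₂.mor (fQ G hd))) :=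
  ⟨((edgeI G gr F S₁ S₂ j₁ j₂ (fE G hd)).θ w.1.1,
    (EE G gr F S₁ S₂ j₁ j₂ n (fQ G hd) (fQ_deg G hd)).θ w.1.2),
    V_prop G gr F S₁ S₂ j₁ j₂ hd w⟩

theorem fibθ_eq_VOf {γ : PΓ} {n : ℕ} (hd : G.d γ 0 = n + 1)
    (w : FibCarrier (S₁.mor (fE G hd))
      (leftCast gr (fE_src G hd).symm (S₁.mor (fQ G hd)))) :
    (fibIso (edgeI G gr F S₁ S₂ j₁ j₂ (fE G hd))
      (leftCast_iso gr (fE_src G hd).symm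
        (EE G gr F S₁ S₂ j₁ j₂ n (fQ G hd) (fQ_deg G hd)))).θ w
      = VOf G gr F S₁ S₂ j₁ j₂ hd w := by
  apply Subtype.ext
  refine Prod.ext rfl ?_
  exact leftCast_iso_θ gr (fE_src G hd).symm _ w.1.2

theorem EEθ_succ {γ : PΓ} {n : ℕ} (hd : G.d γ 0 = n + 1)
    (w : FibCarrier (S₁.mor (fE G hd))
      (leftCast gr (fE_src G hd).symm (S₁.mor (fQ G hd)))) :
    (EE G gr F S₁ S₂ j₁ j₂ (n+1) γ hd).θ
        (cast (sysX_congr G gr S₁ (fE_comp G hd))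
          ((S₁.th (fE_src G hd)).θ w))
      = cast (sysX_congr G gr S₂ (fE_comp G hd))
        ((S₂.th (fE_src G hd)).θ (VOf G gr F S₁ S₂ j₁ j₂ hd w)) := by
  have e1 := transIso_θ (fE_rng G hd) (fQ_src G hd)
    (sysX_congr G gr S₁ (fE_comp G hd))
    (sysX_congr G gr S₂ (fE_comp G hd))
    ((heq_castMor (gr := gr) _ _ _).trans
      (sysmor_congr G gr S₁ (fE_comp G hd)))
    ((heq_castMor (gr := gr) _ _ _).trans
      (sysmor_congr G gr S₂ (fE_comp G hd)))
    ((S₁.th (fE_src G hd)).symm.trans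
      ((isoOfFibProd (S₁.prod_spec (fE_src G hd))).trans
        ((fibIso (edgeI G gr F S₁ S₂ j₁ j₂ (fE G hd))
          (leftCast_iso gr (fE_src G hd).symm
            (EE G gr F S₁ S₂ j₁ j₂ n (fQ G hd) (fQ_deg G hd)))).trans
          ((isoOfFibProd (S₂.prod_spec (fE_src G hd))).symm.trans
            (S₂.th (fE_src G hd))))))
    (cast (sysX_congr G gr S₁ (fE_comp G hd)) ((S₁.th (fE_src G hd)).θ w))
  have hxx : cast (sysX_congr G gr S₁ (fE_comp G hd)).symm
      (cast (sysX_congr G gr S₁ (fE_comp G hd))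
        ((S₁.th (fE_src G hd)).θ w)) = (S₁.th (fE_src G hd)).θ w :=
    eq_of_heq ((cast_heq _ _).trans (cast_heq _ _))
  rw [hxx] at e1
  refine ((show (EE G gr F S₁ S₂ j₁ j₂ (n+1) γ hd).θ
      (cast (sysX_congr G gr S₁ (fE_comp G hd))
        ((S₁.th (fE_src G hd)).θ w)) = _ from e1)).trans ?_
  congr 1
  show (S₂.th (fE_src G hd)).θ
      ((Equiv.refl _).symm
        ((fibIso (edgeI G gr F S₁ S₂ j₁ j₂ (fE G hd))
          (leftCast_iso gr (fE_src G hd).symm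
            (EE G gr F S₁ S₂ j₁ j₂ n (fQ G hd) (fQ_deg G hd)))).θ
          ((Equiv.refl _)
            ((S₁.th (fE_src G hd)).θ.symm ((S₁.th (fE_src G hd)).θ w)))))
    = _
  rw [Equiv.symm_apply_apply]
  simp only [Equiv.refl_apply, Equiv.refl_symm]
  rw [fibθ_eq_VOf]

end Uniq2

section Uniq3
attribute [local instance] Classical.propDecidable

variable {k : ℕ} {VΓ PΓ : Type} (G : KGraphStr 1 VΓ PΓ)
  {ObjF PathF : VΓ → Type} (gr : ∀ v, KGraphStr k (ObjF v) (PathF v))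
  (F : MkFunctorData G ObjF PathF gr)
  (S₁ S₂ : GammaSystem G ObjF PathF gr)
  (j₁ : ∀ γ : PΓ, MorphIso (S₁.mor γ) (F.mor γ))
  (j₂ : ∀ γ : PΓ, MorphIso (S₂.mor γ) (F.mor γ))

theorem edge_congr {γ γ' : PΓ} (h : γ = γ') {x : S₁.X γ} {x' : S₁.X γ'}
    (hx : HEq x x') :
    HEq ((edgeI G gr F S₁ S₂ j₁ j₂ γ).θ x)
      ((edgeI G gr F S₁ S₂ j₁ j₂ γ').θ x') := by
  subst h; cases hx; rfl

/-- Degree-zero case of the coherence. -/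
theorem EE_coh_zero_half (S : GammaSystem G ObjF PathF gr) (α β : PΓ)
    (hd : G.d α 0 = 0) (h : G.src α = G.rng β)
    (y₁ : S.X α) (y₂ : S.X β)
    (hy : (S.mor α).s y₁ = (leftCast gr h.symm (S.mor β)).r y₂) :
    HEq ((S.th h).θ ⟨(y₁, y₂), hy⟩) y₂ := by
  have hvv : G.rng α = G.rng β := (rng_eq_src_of_deg0 G hd).trans h
  have hα' : α = G.ident (G.rng β) :=
    (eq_ident_of_deg0 G hd).trans (congrArg G.ident hvv)
  have h' : G.src (G.ident (G.rng β)) = G.rng β := by rw [G.src_ident]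
  have pf' : (S.mor (G.ident (G.rng β))).s (cast (sysX_congr G gr S hα') y₁)
      = (leftCast gr h'.symm (S.mor β)).r y₂ := by
    refine eq_of_heq ?_
    refine (heq_s_app (gr := gr) (congrArg G.rng hα').symm
      (congrArg G.src hα').symm (sysX_congr G gr S hα').symm
      (sysmor_congr G gr S hα'.symm) (cast_heq _ _)).trans ?_
    refine (heq_of_eq hy).trans ?_
    exact (leftCast_r_heq h.symm _ y₂).trans
      (leftCast_r_heq h'.symm _ y₂).symm
  have T1 : HEq ((S.th h).θ ⟨(y₁, y₂), hy⟩)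
      ((S.th h').θ ⟨(cast (sysX_congr G gr S hα') y₁, y₂), pf'⟩) := by
    refine systh_congr G gr S hα' rfl h h' ?_
    exact fib_mk_heq (congrArg G.rng hα') (congrArg G.src hα') rfl
      (sysX_congr G gr S hα') rfl (sysmor_congr G gr S hα')
      ((heq_leftCast (gr := gr) h.symm _).trans
        (heq_leftCast (gr := gr) h'.symm _).symm)
      (cast_heq _ _).symm (HEq.refl y₂) hy pf'
  refine T1.trans ?_
  refine HEq.trans (cast_heq
    (congrArg S.X (G.ident_comp β)) _).symm ?_
  exact heq_of_eq (S.th_unit_left β h'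
    ⟨(cast (sysX_congr G gr S hα') y₁, y₂), pf'⟩)

end Uniq3

section Uniq4
attribute [local instance] Classical.propDecidable

variable {k : ℕ} {VΓ PΓ : Type} (G : KGraphStr 1 VΓ PΓ)
  {ObjF PathF : VΓ → Type} (gr : ∀ v, KGraphStr k (ObjF v) (PathF v))
  (F : MkFunctorData G ObjF PathF gr)
  (S₁ S₂ : GammaSystem G ObjF PathF gr)
  (j₁ : ∀ γ : PΓ, MorphIso (S₁.mor γ) (F.mor γ))
  (j₂ : ∀ γ : PΓ, MorphIso (S₂.mor γ) (F.mor γ))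

theorem EE_coh (n : ℕ) :
    ∀ (α : PΓ) (hd : G.d α 0 = n) (β : PΓ) (h : G.src α = G.rng β)
      (x₁ : S₁.X α) (x₂ : S₁.X β)
      (hx : (S₁.mor α).s x₁ = (leftCast gr h.symm (S₁.mor β)).r x₂)
      (hx' : (S₂.mor α).s ((EE G gr F S₁ S₂ j₁ j₂ (G.d α 0) α rfl).θ x₁)
        = (leftCast gr h.symm (S₂.mor β)).r
          ((EE G gr F S₁ S₂ j₁ j₂ (G.d β 0) β rfl).θ x₂)),
      (EE G gr F S₁ S₂ j₁ j₂ (G.d (G.comp α β) 0) (G.comp α β) rfl).θ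
          ((S₁.th h).θ ⟨(x₁, x₂), hx⟩)
        = (S₂.th h).θ ⟨((EE G gr F S₁ S₂ j₁ j₂ (G.d α 0) α rfl).θ x₁,
            (EE G gr F S₁ S₂ j₁ j₂ (G.d β 0) β rfl).θ x₂), hx'⟩ := by
  induction n with
  | zero =>
    intro α hd β h x₁ x₂ hx hx'
    have hc : G.comp α β = β := zero_hcomp G hd h
    refine eq_of_heq ?_
    refine HEq.trans (EE_congr G gr F S₁ S₂ j₁ j₂ hc rfl rfl
      (EE_coh_zero_half G gr S₁ α β hd h x₁ x₂ hx)) ?_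
    exact (EE_coh_zero_half G gr S₂ α β hd h _ _ hx').symm
  | succ n ih =>
    intro α hd β h x₁ x₂ hx hx'
    -- decomposition data
    have hEQ := fE_src G hd
    have hceq := fE_comp G hd
    have hd'' := succ_hd' G hd h
    have h₂' := succ_h₂ G hd h
    have h₃ : G.src (G.comp (fE G hd) (fQ G hd)) = G.rng β :=
      (congrArg G.src hceq).trans h
    have h₄ : G.src (fE G hd) = G.rng (G.comp (fQ G hd) β) := by
      rw [G.rng_comp _ _ h₂']; exact hEQ
    obtain ⟨he'', hq''⟩ := succ_uniq G hd h
    -- the preimage w of x₁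
    set w := (S₁.th hEQ).θ.symm (cast (sysX_congr G gr S₁ hceq).symm x₁)
      with hwdef
    have hθw : (S₁.th hEQ).θ w = cast (sysX_congr G gr S₁ hceq).symm x₁ :=
      Equiv.apply_symm_apply _ _
    have hx₁w : cast (sysX_congr G gr S₁ hceq) ((S₁.th hEQ).θ w) = x₁ := by
      rw [hθw]
      exact eq_of_heq ((cast_heq _ _).trans (cast_heq _ _))
    have hx₁heq : HEq x₁ ((S₁.th hEQ).θ w) := by
      rw [hθw]; exact (cast_heq _ _).symm
    -- props for S₁.th_assoc
    have hL₁ : (S₁.mor (G.comp (fE G hd) (fQ G hd))).s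
        ((S₁.th hEQ).θ ⟨(w.1.1, w.1.2), w.2⟩)
        = (leftCast gr h₃.symm (S₁.mor β)).r x₂ := by
      refine eq_of_heq ?_
      refine (heq_s_app (gr := gr) (congrArg G.rng hceq)
        (congrArg G.src hceq) (sysX_congr G gr S₁ hceq)
        (sysmor_congr G gr S₁ hceq) (M := S₁.mor (G.comp (fE G hd) (fQ G hd)))
        (x := (S₁.th hEQ).θ ⟨(w.1.1, w.1.2), w.2⟩) hx₁heq.symm).trans ?_
      refine (heq_of_eq hx).trans ?_
      exact (leftCast_r_heq h.symm _ x₂).trans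
        (leftCast_r_heq h₃.symm _ x₂).symm
    have hx₂₃₁ : (S₁.mor (fQ G hd)).s w.1.2
        = (leftCast gr h₂'.symm (S₁.mor β)).r x₂ := by
      refine eq_of_heq ?_
      refine HEq.trans (heq_of_eq
        (leftCast_s_eq (gr := gr) hEQ.symm (S₁.mor (fQ G hd)) w.1.2).symm) ?_
      refine HEq.trans (heq_of_eq
        ((S₁.prod_spec hEQ).2.1 w).symm) ?_
      refine HEq.trans (heq_of_eq ((S₁.th hEQ).s_θ w).symm) ?_
      refine (castMor_s_heq (gr := gr) _ _ _ _).trans ?_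
      refine (heq_s_app (gr := gr) (congrArg G.rng hceq)
        (congrArg G.src hceq) (sysX_congr G gr S₁ hceq)
        (sysmor_congr G gr S₁ hceq) hx₁heq.symm).trans ?_
      refine (heq_of_eq hx).trans ?_
      exact (leftCast_r_heq h.symm _ x₂).trans
        (leftCast_r_heq h₂'.symm _ x₂).symm
    have hR₁ : (S₁.mor (fE G hd)).s w.1.1
        = (leftCast gr h₄.symm (S₁.mor (G.comp (fQ G hd) β))).r
          ((S₁.th h₂').θ ⟨(w.1.2, x₂), hx₂₃₁⟩) := by
      refine eq_of_heq ?_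
      refine (heq_of_eq w.2).trans ?_
      refine (leftCast_r_heq hEQ.symm _ w.1.2).trans ?_
      refine HEq.trans (heq_of_eq
        ((S₁.prod_spec h₂').1 ⟨(w.1.2, x₂), hx₂₃₁⟩).symm) ?_
      refine HEq.trans (heq_of_eq ((S₁.th h₂').r_θ _).symm) ?_
      refine (castMor_r_heq (gr := gr) _ _ _ _).trans ?_
      exact (leftCast_r_heq h₄.symm _ _).symm
    have A₁ := S₁.th_assoc (fE G hd) (fQ G hd) β hEQ h₂' h₃ h₄
      w.1.1 w.1.2 x₂ w.2 hL₁ hx₂₃₁ hR₁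
    have B₁ : HEq ((S₁.th h).θ ⟨(x₁, x₂), hx⟩)
        ((S₁.th h₃).θ ⟨((S₁.th hEQ).θ ⟨(w.1.1, w.1.2), w.2⟩, x₂), hL₁⟩) := by
      refine systh_congr G gr S₁ hceq.symm rfl h h₃ ?_
      exact fib_mk_heq (congrArg G.rng hceq.symm) (congrArg G.src hceq.symm)
        rfl (sysX_congr G gr S₁ hceq.symm) rfl
        (sysmor_congr G gr S₁ hceq.symm)
        ((heq_leftCast (gr := gr) h.symm _).trans
          (heq_leftCast (gr := gr) h₃.symm _).symm)
        hx₁heq (HEq.refl x₂) hx hL₁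
    have inner1_heq : HEq ((S₁.th h).θ ⟨(x₁, x₂), hx⟩)
        ((S₁.th h₄).θ ⟨(w.1.1, (S₁.th h₂').θ ⟨(w.1.2, x₂), hx₂₃₁⟩), hR₁⟩) :=
      (B₁.trans (cast_heq (congrArg S₁.X
        (G.comp_assoc _ _ _ hEQ h₂')) _).symm).trans (heq_of_eq A₁)
    -- bridge (e, comp q β) to the canonical decomposition of comp α β
    have hTeq := (fibKMorph_heq (gr := gr) (congrArg G.rng he'')
      (congrArg G.src he'') (congrArg G.src hq'')
      (sysX_congr G gr S₁ he'') (sysX_congr G gr S₁ hq'')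
      (sysmor_congr G gr S₁ he'')
      ((heq_leftCast (gr := gr) h₄.symm _).trans
        ((sysmor_congr G gr S₁ hq'').trans
          (heq_leftCast (gr := gr) (fE_src G hd'').symm _).symm))).1
    set QL : FibCarrier (S₁.mor (fE G hd))
        (leftCast gr h₄.symm (S₁.mor (G.comp (fQ G hd) β))) :=
      ⟨(w.1.1, (S₁.th h₂').θ ⟨(w.1.2, x₂), hx₂₃₁⟩), hR₁⟩ with hQLdef
    have C₁ : HEq ((S₁.th h₄).θ QL) ((S₁.th (fE_src G hd'')).θ (cast hTeq QL)) :=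
      systh_congr G gr S₁ he'' hq'' h₄ (fE_src G hd'')
        (cast_heq hTeq QL).symm
    have hkey : (S₁.th h).θ ⟨(x₁, x₂), hx⟩
        = cast (sysX_congr G gr S₁ (fE_comp G hd''))
          ((S₁.th (fE_src G hd'')).θ (cast hTeq QL)) :=
      eq_of_heq ((inner1_heq.trans C₁).trans (cast_heq _ _).symm)
    have LHS1 : (EE G gr F S₁ S₂ j₁ j₂ (G.d (G.comp α β) 0) (G.comp α β) rfl).θ
          ((S₁.th h).θ ⟨(x₁, x₂), hx⟩)
        = (EE G gr F S₁ S₂ j₁ j₂ ((n + G.d β 0) + 1) (G.comp α β) hd'').θ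
          ((S₁.th h).θ ⟨(x₁, x₂), hx⟩) :=
      eq_of_heq (EE_congr G gr F S₁ S₂ j₁ j₂ rfl rfl hd'' (HEq.refl _))
    have LHS2 := EEθ_succ G gr F S₁ S₂ j₁ j₂ hd'' (cast hTeq QL)
    have hWproj := fib_proj_heq (gr := gr) (congrArg G.rng he'')
      (congrArg G.src he'') (congrArg G.src hq'')
      (sysX_congr G gr S₁ he'') (sysX_congr G gr S₁ hq'')
      (sysmor_congr G gr S₁ he'')
      ((heq_leftCast (gr := gr) h₄.symm _).trans
        ((sysmor_congr G gr S₁ hq'').trans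
          (heq_leftCast (gr := gr) (fE_src G hd'').symm _).symm))
      (u := QL) (u' := cast hTeq QL) (cast_heq hTeq QL).symm
    have hEα : (EE G gr F S₁ S₂ j₁ j₂ (G.d α 0) α rfl).θ x₁
        = cast (sysX_congr G gr S₂ (fE_comp G hd))
          ((S₂.th hEQ).θ (VOf G gr F S₁ S₂ j₁ j₂ hd w)) := by
      have h0 := EEθ_succ G gr F S₁ S₂ j₁ j₂ hd w
      rw [hx₁w] at h0
      exact (eq_of_heq (EE_congr G gr F S₁ S₂ j₁ j₂ rfl rfl hd
        (HEq.refl x₁))).trans h0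
    have hEαheq : HEq ((EE G gr F S₁ S₂ j₁ j₂ (G.d α 0) α rfl).θ x₁)
        ((S₂.th hEQ).θ (VOf G gr F S₁ S₂ j₁ j₂ hd w)) := by
      rw [hEα]; exact cast_heq _ _
    have hL₂ : (S₂.mor (G.comp (fE G hd) (fQ G hd))).s
        ((S₂.th hEQ).θ (VOf G gr F S₁ S₂ j₁ j₂ hd w))
        = (leftCast gr h₃.symm (S₂.mor β)).r
          ((EE G gr F S₁ S₂ j₁ j₂ (G.d β 0) β rfl).θ x₂) := by
      refine eq_of_heq ?_
      refine (heq_s_app (gr := gr) (congrArg G.rng hceq)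
        (congrArg G.src hceq) (sysX_congr G gr S₂ hceq)
        (sysmor_congr G gr S₂ hceq) hEαheq.symm).trans ?_
      refine (heq_of_eq hx').trans ?_
      exact (leftCast_r_heq h.symm _ _).trans
        (leftCast_r_heq h₃.symm _ _).symm
    have hx₂₃₂ : (S₂.mor (fQ G hd)).s
        ((EE G gr F S₁ S₂ j₁ j₂ n (fQ G hd) (fQ_deg G hd)).θ w.1.2)
        = (leftCast gr h₂'.symm (S₂.mor β)).r
          ((EE G gr F S₁ S₂ j₁ j₂ (G.d β 0) β rfl).θ x₂) := by
      refine eq_of_heq ?_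
      refine (heq_of_eq
        ((EE G gr F S₁ S₂ j₁ j₂ n (fQ G hd) (fQ_deg G hd)).s_θ w.1.2)).trans ?_
      refine (heq_of_eq hx₂₃₁).trans ?_
      refine (leftCast_r_heq h₂'.symm _ x₂).trans ?_
      refine HEq.trans (heq_of_eq
        ((EE G gr F S₁ S₂ j₁ j₂ (G.d β 0) β rfl).r_θ x₂).symm) ?_
      exact (leftCast_r_heq h₂'.symm _ _).symm
    have hR₂ : (S₂.mor (fE G hd)).s
        ((edgeI G gr F S₁ S₂ j₁ j₂ (fE G hd)).θ w.1.1)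
        = (leftCast gr h₄.symm (S₂.mor (G.comp (fQ G hd) β))).r
          ((S₂.th h₂').θ
            ⟨((EE G gr F S₁ S₂ j₁ j₂ n (fQ G hd) (fQ_deg G hd)).θ w.1.2,
              (EE G gr F S₁ S₂ j₁ j₂ (G.d β 0) β rfl).θ x₂), hx₂₃₂⟩) := by
      refine eq_of_heq ?_
      refine (heq_of_eq (V_prop G gr F S₁ S₂ j₁ j₂ hd w)).trans ?_
      refine (leftCast_r_heq hEQ.symm _ _).trans ?_
      refine HEq.trans (heq_of_eq ((S₂.prod_spec h₂').1
        ⟨((EE G gr F S₁ S₂ j₁ j₂ n (fQ G hd) (fQ_deg G hd)).θ w.1.2,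
          (EE G gr F S₁ S₂ j₁ j₂ (G.d β 0) β rfl).θ x₂), hx₂₃₂⟩).symm) ?_
      refine HEq.trans (heq_of_eq ((S₂.th h₂').r_θ
        ⟨((EE G gr F S₁ S₂ j₁ j₂ n (fQ G hd) (fQ_deg G hd)).θ w.1.2,
          (EE G gr F S₁ S₂ j₁ j₂ (G.d β 0) β rfl).θ x₂), hx₂₃₂⟩).symm) ?_
      refine (castMor_r_heq (gr := gr) _ _ _ _).trans ?_
      exact (leftCast_r_heq h₄.symm _ _).symm
    have A₂ := S₂.th_assoc (fE G hd) (fQ G hd) β hEQ h₂' h₃ h₄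
      ((edgeI G gr F S₁ S₂ j₁ j₂ (fE G hd)).θ w.1.1)
      ((EE G gr F S₁ S₂ j₁ j₂ n (fQ G hd) (fQ_deg G hd)).θ w.1.2)
      ((EE G gr F S₁ S₂ j₁ j₂ (G.d β 0) β rfl).θ x₂)
      (V_prop G gr F S₁ S₂ j₁ j₂ hd w) hL₂ hx₂₃₂ hR₂
    have B₂ : HEq ((S₂.th h).θ
        ⟨((EE G gr F S₁ S₂ j₁ j₂ (G.d α 0) α rfl).θ x₁,
          (EE G gr F S₁ S₂ j₁ j₂ (G.d β 0) β rfl).θ x₂), hx'⟩)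
        ((S₂.th h₃).θ ⟨((S₂.th hEQ).θ (VOf G gr F S₁ S₂ j₁ j₂ hd w),
          (EE G gr F S₁ S₂ j₁ j₂ (G.d β 0) β rfl).θ x₂), hL₂⟩) := by
      refine systh_congr G gr S₂ hceq.symm rfl h h₃ ?_
      exact fib_mk_heq (congrArg G.rng hceq.symm) (congrArg G.src hceq.symm)
        rfl (sysX_congr G gr S₂ hceq.symm) rfl
        (sysmor_congr G gr S₂ hceq.symm)
        ((heq_leftCast (gr := gr) h.symm _).trans
          (heq_leftCast (gr := gr) h₃.symm _).symm)
        hEαheq (HEq.refl _) hx' hL₂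
    have hx'q : (S₂.mor (fQ G hd)).s
        ((EE G gr F S₁ S₂ j₁ j₂ (G.d (fQ G hd) 0) (fQ G hd) rfl).θ w.1.2)
        = (leftCast gr h₂'.symm (S₂.mor β)).r
          ((EE G gr F S₁ S₂ j₁ j₂ (G.d β 0) β rfl).θ x₂) := by
      have hbr : (EE G gr F S₁ S₂ j₁ j₂ (G.d (fQ G hd) 0) (fQ G hd) rfl).θ w.1.2
          = (EE G gr F S₁ S₂ j₁ j₂ n (fQ G hd) (fQ_deg G hd)).θ w.1.2 :=
        eq_of_heq (EE_congr G gr F S₁ S₂ j₁ j₂ rfl rfl (fQ_deg G hd)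
          (HEq.refl _))
      rw [hbr]; exact hx₂₃₂
    have IH := ih (fQ G hd) (fQ_deg G hd) β h₂' w.1.2 x₂ hx₂₃₁ hx'q
    have hinner2eq : (⟨((EE G gr F S₁ S₂ j₁ j₂ (G.d (fQ G hd) 0) (fQ G hd) rfl).θ w.1.2,
          (EE G gr F S₁ S₂ j₁ j₂ (G.d β 0) β rfl).θ x₂), hx'q⟩ :
          FibCarrier (S₂.mor (fQ G hd)) (leftCast gr h₂'.symm (S₂.mor β)))
        = ⟨((EE G gr F S₁ S₂ j₁ j₂ n (fQ G hd) (fQ_deg G hd)).θ w.1.2,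
          (EE G gr F S₁ S₂ j₁ j₂ (G.d β 0) β rfl).θ x₂), hx₂₃₂⟩ := by
      apply Subtype.ext
      refine Prod.ext ?_ rfl
      exact eq_of_heq (EE_congr G gr F S₁ S₂ j₁ j₂ rfl rfl (fQ_deg G hd)
        (HEq.refl _))
    rw [hinner2eq] at IH
    rw [LHS1, hkey, LHS2]
    refine eq_of_heq ?_
    refine (cast_heq _ _).trans ?_
    refine HEq.trans (b := (S₂.th h₄).θ
      ⟨((edgeI G gr F S₁ S₂ j₁ j₂ (fE G hd)).θ w.1.1,
        (S₂.th h₂').θ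
          ⟨((EE G gr F S₁ S₂ j₁ j₂ n (fQ G hd) (fQ_deg G hd)).θ w.1.2,
            (EE G gr F S₁ S₂ j₁ j₂ (G.d β 0) β rfl).θ x₂), hx₂₃₂⟩), hR₂⟩)
      ?_ ?_
    · refine systh_congr G gr S₂ he''.symm hq''.symm (fE_src G hd'') h₄ ?_
      refine fib_mk_heq (congrArg G.rng he''.symm) (congrArg G.src he''.symm)
        (congrArg G.src hq''.symm) (sysX_congr G gr S₂ he''.symm)
        (sysX_congr G gr S₂ hq''.symm) (sysmor_congr G gr S₂ he''.symm)
        ((heq_leftCast (gr := gr) (fE_src G hd'').symm _).trans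
          ((sysmor_congr G gr S₂ hq''.symm).trans
            (heq_leftCast (gr := gr) h₄.symm _).symm)) ?_ ?_ _ _
      · exact edge_congr G gr F S₁ S₂ j₁ j₂ he''.symm hWproj.1.symm
      · refine HEq.trans (EE_congr G gr F S₁ S₂ j₁ j₂ hq''.symm
          (fQ_deg G hd'') rfl hWproj.2.symm) ?_
        exact heq_of_eq IH
    · refine HEq.trans (heq_of_eq A₂.symm) ?_
      exact (cast_heq _ _).trans B₂.symm

end Uniq4

/-- if `Γ` is a `1`-graph and `F : Γ → M_k` is a functor, then
there is a `Γ`-system of k-morphs inducing `F` (i.e. with `[X_γ] = F(γ)` for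
all `γ`), and any two `Γ`-systems inducing `F` are isomorphic as
`Γ`-systems. -/
theorem oneGraph_system_exists_unique {k : ℕ} {VΓ PΓ : Type}
    (G : KGraphStr 1 VΓ PΓ) (ObjF PathF : VΓ → Type)
    (gr : ∀ v, KGraphStr k (ObjF v) (PathF v))
    (F : MkFunctorData G ObjF PathF gr) :
    (∃ sys : GammaSystem G ObjF PathF gr,
      ∀ γ : PΓ, Nonempty (MorphIso (sys.mor γ) (F.mor γ))) ∧
    (∀ sys₁ sys₂ : GammaSystem G ObjF PathF gr,
      (∀ γ : PΓ, Nonempty (MorphIso (sys₁.mor γ) (F.mor γ))) →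
      (∀ γ : PΓ, Nonempty (MorphIso (sys₂.mor γ) (F.mor γ))) →
      SystemIso sys₁ sys₂) := by
  constructor
  · exact ⟨sys0 G gr F, sys0_induces G gr F⟩
  · intro sys₁ sys₂ h1 h2
    let j₁ : ∀ γ : PΓ, MorphIso (sys₁.mor γ) (F.mor γ) := fun γ => (h1 γ).some
    let j₂ : ∀ γ : PΓ, MorphIso (sys₂.mor γ) (F.mor γ) := fun γ => (h2 γ).some
    refine ⟨fun γ => EE G gr F sys₁ sys₂ j₁ j₂ (G.d γ 0) γ rfl, ?_⟩
    intro α β h x₁ x₂ hx hx'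
    exact EE_coh G gr F sys₁ sys₂ j₁ j₂ (G.d α 0) α rfl β h x₁ x₂ hx hx'
end

section
/- Consider the 3-coloured graph (Spielberg's example) on 8 vertices with edge sets X₁ = {f₁,…,f₈}, X₂ = {g₁,…,g₈}, X₃ = {h₁,…,h₈} and incidences as specified, for which for each pair i ≠ j there is a unique range- and source-preserving bijection θ_{i,j} between c_i c_j-coloured paths and c_j c_i-coloured paths. Then the bijections θ_{i,j} do not define an associative system of factorisation rules: applying the θ's in the two possible orders to the tricoloured path h₈g₆f₂ yields the distinct paths f₇g₃h₁ and f₈g₄h₂. Consequently, there is no 3-graph whose skeleton is this 3-coloured graph. -/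
/-! STATEMENT 16: Spielberg's example.  The vertices and the three coloured
edge sets of the 3-coloured graph, with range (`r`) and source (`s`) maps
(an edge listed as `a → b` has range `a` and source `b`). -/

inductive SpV | v1 | v2 | v3 | v4 | v5 | v6a | v6b
             | w1a | w1b | w2 | w3 | w4 | w5 | w6
  deriving DecidableEq

inductive SpE1 | f1 | f2 | f3 | f4 | f5 | f6 | f7 | f8 deriving DecidableEq
inductive SpE2 | g1 | g2 | g3 | g4 | g5 | g6 | g7 | g8 deriving DecidableEq
inductive SpE3 | h1 | h2 | h3 | h4 | h5 | h6 | h7 | h8 deriving DecidableEq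

open SpV SpE1 SpE2 SpE3

def spr1 : SpE1 → SpV
  | f1 => v3 | f2 => v5 | f3 => w3 | f4 => w5
  | f5 => v6a | f6 => v6b | f7 => w6 | f8 => w6
def sps1 : SpE1 → SpV
  | f1 => v1 | f2 => v1 | f3 => w1a | f4 => w1b
  | f5 => v2 | f6 => v4 | f7 => w2 | f8 => w4
def spr2 : SpE2 → SpV
  | g1 => v2 | g2 => v4 | g3 => w2 | g4 => w4
  | g5 => v6b | g6 => v6a | g7 => w6 | g8 => w6
def sps2 : SpE2 → SpV
  | g1 => v1 | g2 => v1 | g3 => w1a | g4 => w1b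
  | g5 => v3 | g6 => v5 | g7 => w3 | g8 => w5
def spr3 : SpE3 → SpV
  | h1 => w1a | h2 => w1b | h3 => w2 | h4 => w3
  | h5 => w4 | h6 => w5 | h7 => w6 | h8 => w6
def sps3 : SpE3 → SpV
  | h1 => v1 | h2 => v1 | h3 => v2 | h4 => v3
  | h5 => v4 | h6 => v5 | h7 => v6b | h8 => v6a

/-- `t` swaps composable bi-coloured paths, preserving range and source:
given a composable pair `(a,b)` (colour `i` then colour `j`), `t a b = (b',a')`
is a composable pair (colour `j` then colour `i`) with the same range and the
same source.  This is the defining property of the factorisation rules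
`θ_{i,j}`; in this graph such a swap is unique. -/
def SwapCompat {Ei Ej : Type} (ri si : Ei → SpV) (rj sj : Ej → SpV)
    (t : Ei → Ej → Ej × Ei) : Prop :=
  ∀ a b, si a = rj b →
    rj (t a b).1 = ri a ∧ ri (t a b).2 = sj (t a b).1 ∧
    si (t a b).2 = sj b

/-- Any range/source-preserving swap on this graph is forced to the stated
values, and the two orders of colour-reversal disagree. -/
lemma sp_part1 :
    ∀ (t21 : SpE2 → SpE1 → SpE1 × SpE2)
       (t31 : SpE3 → SpE1 → SpE1 × SpE3)
       (t32 : SpE3 → SpE2 → SpE2 × SpE3),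
       SwapCompat spr2 sps2 spr1 sps1 t21 →
       SwapCompat spr3 sps3 spr1 sps1 t31 →
       SwapCompat spr3 sps3 spr2 sps2 t32 →
       t21 g6 f2 = (f5, g1) ∧ t31 h8 f5 = (f7, h3) ∧ t32 h3 g1 = (g3, h1) ∧
       t32 h8 g6 = (g8, h6) ∧ t31 h6 f2 = (f4, h2) ∧ t21 g8 f4 = (f8, g4) ∧
       ((f7, g3, h1) : SpE1 × SpE2 × SpE3) ≠ (f8, g4, h2) := by
  intro t21 t31 t32 h21 h31 h32
  refine ⟨?_, ?_, ?_, ?_, ?_, ?_, by decide⟩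
  · have h := h21 g6 f2 rfl
    rcases hz : t21 g6 f2 with ⟨x, y⟩
    rw [hz] at h; revert h
    cases x <;> cases y <;> decide
  · have h := h31 h8 f5 rfl
    rcases hz : t31 h8 f5 with ⟨x, y⟩
    rw [hz] at h; revert h
    cases x <;> cases y <;> decide
  · have h := h32 h3 g1 rfl
    rcases hz : t32 h3 g1 with ⟨x, y⟩
    rw [hz] at h; revert h
    cases x <;> cases y <;> decide
  · have h := h32 h8 g6 rfl
    rcases hz : t32 h8 g6 with ⟨x, y⟩
    rw [hz] at h; revert h
    cases x <;> cases y <;> decide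
  · have h := h31 h6 f2 rfl
    rcases hz : t31 h6 f2 with ⟨x, y⟩
    rw [hz] at h; revert h
    cases x <;> cases y <;> decide
  · have h := h21 g8 f4 rfl
    rcases hz : t21 g8 f4 with ⟨x, y⟩
    rw [hz] at h; revert h
    cases x <;> cases y <;> decide

/-- Unique factorisation yields a range/source-preserving swap of a
composable bicoloured pair, together with equality of compositions. -/
lemma sp_swap_exists {O P : Type} (S : KGraphStr 3 O P) (fv : SpV ≃ O)
    {Ei Ej : Type} (ri si : Ei → SpV) (rj sj : Ej → SpV)
    (ei : Ei → P) (ej : Ej → P) (di dj : Fin 3 → ℕ)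
    (hdi : ∀ a, S.d (ei a) = di) (hdj : ∀ a, S.d (ej a) = dj)
    (hri : ∀ a, S.rng (ei a) = fv (ri a)) (hsi : ∀ a, S.src (ei a) = fv (si a))
    (hrj : ∀ a, S.rng (ej a) = fv (rj a)) (hsj : ∀ a, S.src (ej a) = fv (sj a))
    (hsurj : ∀ p, S.d p = dj → ∃ a, p = ej a)
    (hsuri : ∀ p, S.d p = di → ∃ a, p = ei a)
    (a : Ei) (b : Ej) (hab : si a = rj b) :
    ∃ b' a', rj b' = ri a ∧ ri a' = sj b' ∧ si a' = sj b ∧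
      S.comp (ei a) (ej b) = S.comp (ej b') (ei a') := by
  have hcab : S.src (ei a) = S.rng (ej b) := by rw [hsi, hrj, hab]
  have hdp : S.d (S.comp (ei a) (ej b)) = dj + di := by
    rw [S.d_comp _ _ hcab, hdi, hdj, add_comm]
  obtain ⟨⟨μ, ν⟩, ⟨hc, hdμ, hdν, heq⟩, -⟩ := S.factor _ dj di hdp
  obtain ⟨b', rfl⟩ := hsurj μ hdμ
  obtain ⟨a', rfl⟩ := hsuri ν hdν
  refine ⟨b', a', ?_, ?_, ?_, heq.symm⟩
  · apply fv.injective
    have h := S.rng_comp _ _ hc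
    rw [heq, S.rng_comp _ _ hcab, hri, hrj] at h
    exact h.symm
  · apply fv.injective
    rw [← hri, ← hsj]
    exact hc.symm
  · apply fv.injective
    have h := S.src_comp _ _ hc
    rw [heq, S.src_comp _ _ hcab, hsi, hsj] at h
    exact h.symm

/-- (1) any factorisation rules (range- and source-preserving
swaps) on Spielberg's 3-coloured graph are forced to take the stated values;
reversing the colours of the path `h₈g₆f₂` in the two possible orders yields
the two distinct tricoloured paths `f₇g₃h₁ ≠ f₈g₄h₂`, so the `θ_{i,j}` are
not associative.  (2) Consequently there is no 3-graph whose skeleton is this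
3-coloured graph. -/
theorem spielberg_no_three_graph :
    (∀ (t21 : SpE2 → SpE1 → SpE1 × SpE2)
       (t31 : SpE3 → SpE1 → SpE1 × SpE3)
       (t32 : SpE3 → SpE2 → SpE2 × SpE3),
       SwapCompat spr2 sps2 spr1 sps1 t21 →
       SwapCompat spr3 sps3 spr1 sps1 t31 →
       SwapCompat spr3 sps3 spr2 sps2 t32 →
       -- first order: h₈g₆f₂ → h₈f₅g₁ → f₇h₃g₁ → f₇g₃h₁
       t21 g6 f2 = (f5, g1) ∧ t31 h8 f5 = (f7, h3) ∧ t32 h3 g1 = (g3, h1) ∧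
       -- second order: h₈g₆f₂ → g₈h₆f₂ → g₈f₄h₂ → f₈g₄h₂
       t32 h8 g6 = (g8, h6) ∧ t31 h6 f2 = (f4, h2) ∧ t21 g8 f4 = (f8, g4) ∧
       -- the two outcomes differ
       ((f7, g3, h1) : SpE1 × SpE2 × SpE3) ≠ (f8, g4, h2)) ∧
    ¬ ∃ (O P : Type) (S : KGraphStr 3 O P) (fv : SpV ≃ O)
        (e1 : SpE1 → P) (e2 : SpE2 → P) (e3 : SpE3 → P),
        (∀ a, S.d (e1 a) = Pi.single (0 : Fin 3) 1) ∧
        (∀ a, S.d (e2 a) = Pi.single (1 : Fin 3) 1) ∧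
        (∀ a, S.d (e3 a) = Pi.single (2 : Fin 3) 1) ∧
        (∀ a, S.rng (e1 a) = fv (spr1 a)) ∧ (∀ a, S.src (e1 a) = fv (sps1 a)) ∧
        (∀ a, S.rng (e2 a) = fv (spr2 a)) ∧ (∀ a, S.src (e2 a) = fv (sps2 a)) ∧
        (∀ a, S.rng (e3 a) = fv (spr3 a)) ∧ (∀ a, S.src (e3 a) = fv (sps3 a)) ∧
        Function.Injective e1 ∧ Function.Injective e2 ∧ Function.Injective e3 ∧
        (∀ p : P, S.d p = Pi.single (0 : Fin 3) 1 → ∃ a, p = e1 a) ∧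
        (∀ p : P, S.d p = Pi.single (1 : Fin 3) 1 → ∃ a, p = e2 a) ∧
        (∀ p : P, S.d p = Pi.single (2 : Fin 3) 1 → ∃ a, p = e3 a) := by
  refine ⟨sp_part1, ?_⟩
  rintro ⟨O, P, S, fv, e1, e2, e3, hd1, hd2, hd3, hr1, hs1, hr2, hs2, hr3, hs3,
    hi1, hi2, hi3, hf1, hf2, hf3⟩
  -- the three families of swaps coming from unique factorisation
  have key21 := sp_swap_exists S fv spr2 sps2 spr1 sps1 e2 e1 _ _
    hd2 hd1 hr2 hs2 hr1 hs1 hf1 hf2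
  have key31 := sp_swap_exists S fv spr3 sps3 spr1 sps1 e3 e1 _ _
    hd3 hd1 hr3 hs3 hr1 hs1 hf1 hf3
  have key32 := sp_swap_exists S fv spr3 sps3 spr2 sps2 e3 e2 _ _
    hd3 hd2 hr3 hs3 hr2 hs2 hf2 hf3
  choose B21 A21 p21 q21 r21 c21 using key21
  choose B31 A31 p31 q31 r31 c31 using key31
  choose B32 A32 p32 q32 r32 c32 using key32
  -- forced values of the six relevant swaps
  have e21a : B21 g6 f2 rfl = f5 ∧ A21 g6 f2 rfl = g1 := by
    have a1 := p21 g6 f2 rfl; have a2 := q21 g6 f2 rfl; have a3 := r21 g6 f2 rfl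
    revert a1 a2 a3
    generalize B21 g6 f2 rfl = x; generalize A21 g6 f2 rfl = y
    cases x <;> cases y <;> decide
  have e31a : B31 h8 f5 rfl = f7 ∧ A31 h8 f5 rfl = h3 := by
    have a1 := p31 h8 f5 rfl; have a2 := q31 h8 f5 rfl; have a3 := r31 h8 f5 rfl
    revert a1 a2 a3
    generalize B31 h8 f5 rfl = x; generalize A31 h8 f5 rfl = y
    cases x <;> cases y <;> decide
  have e32a : B32 h3 g1 rfl = g3 ∧ A32 h3 g1 rfl = h1 := by
    have a1 := p32 h3 g1 rfl; have a2 := q32 h3 g1 rfl; have a3 := r32 h3 g1 rfl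
    revert a1 a2 a3
    generalize B32 h3 g1 rfl = x; generalize A32 h3 g1 rfl = y
    cases x <;> cases y <;> decide
  have e32b : B32 h8 g6 rfl = g8 ∧ A32 h8 g6 rfl = h6 := by
    have a1 := p32 h8 g6 rfl; have a2 := q32 h8 g6 rfl; have a3 := r32 h8 g6 rfl
    revert a1 a2 a3
    generalize B32 h8 g6 rfl = x; generalize A32 h8 g6 rfl = y
    cases x <;> cases y <;> decide
  have e31b : B31 h6 f2 rfl = f4 ∧ A31 h6 f2 rfl = h2 := by
    have a1 := p31 h6 f2 rfl; have a2 := q31 h6 f2 rfl; have a3 := r31 h6 f2 rfl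
    revert a1 a2 a3
    generalize B31 h6 f2 rfl = x; generalize A31 h6 f2 rfl = y
    cases x <;> cases y <;> decide
  have e21b : B21 g8 f4 rfl = f8 ∧ A21 g8 f4 rfl = g4 := by
    have a1 := p21 g8 f4 rfl; have a2 := q21 g8 f4 rfl; have a3 := r21 g8 f4 rfl
    revert a1 a2 a3
    generalize B21 g8 f4 rfl = x; generalize A21 g8 f4 rfl = y
    cases x <;> cases y <;> decide
  -- composition equalities for the six swaps
  have C1 : S.comp (e2 g6) (e1 f2) = S.comp (e1 f5) (e2 g1) := by
    have h := c21 g6 f2 rfl; rwa [e21a.1, e21a.2] at h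
  have C2 : S.comp (e3 h8) (e1 f5) = S.comp (e1 f7) (e3 h3) := by
    have h := c31 h8 f5 rfl; rwa [e31a.1, e31a.2] at h
  have C3 : S.comp (e3 h3) (e2 g1) = S.comp (e2 g3) (e3 h1) := by
    have h := c32 h3 g1 rfl; rwa [e32a.1, e32a.2] at h
  have C4 : S.comp (e3 h8) (e2 g6) = S.comp (e2 g8) (e3 h6) := by
    have h := c32 h8 g6 rfl; rwa [e32b.1, e32b.2] at h
  have C5 : S.comp (e3 h6) (e1 f2) = S.comp (e1 f4) (e3 h2) := by
    have h := c31 h6 f2 rfl; rwa [e31b.1, e31b.2] at h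
  have C6 : S.comp (e2 g8) (e1 f4) = S.comp (e1 f8) (e2 g4) := by
    have h := c21 g8 f4 rfl; rwa [e21b.1, e21b.2] at h
  -- composability facts
  have cA0 : S.src (e3 h8) = S.rng (e2 g6) := by rw [hs3, hr2]; rfl
  have cB0 : S.src (e2 g6) = S.rng (e1 f2) := by rw [hs2, hr1]; rfl
  have cA1 : S.src (e3 h8) = S.rng (e1 f5) := by rw [hs3, hr1]; rfl
  have cA2 : S.src (e1 f5) = S.rng (e2 g1) := by rw [hs1, hr2]; rfl
  have cA3 : S.src (e1 f7) = S.rng (e3 h3) := by rw [hs1, hr3]; rfl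
  have cA4 : S.src (e3 h3) = S.rng (e2 g1) := by rw [hs3, hr2]; rfl
  have cB1 : S.src (e2 g8) = S.rng (e3 h6) := by rw [hs2, hr3]; rfl
  have cB2 : S.src (e3 h6) = S.rng (e1 f2) := by rw [hs3, hr1]; rfl
  have cB3 : S.src (e2 g8) = S.rng (e1 f4) := by rw [hs2, hr1]; rfl
  have cB4 : S.src (e1 f4) = S.rng (e3 h2) := by rw [hs1, hr3]; rfl
  have cB5 : S.src (e1 f8) = S.rng (e2 g4) := by rw [hs1, hr2]; rfl
  have cB6 : S.src (e2 g4) = S.rng (e3 h2) := by rw [hs2, hr3]; rfl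
  have cP2 : S.src (S.comp (e3 h8) (e2 g6)) = S.rng (e1 f2) := by
    rw [S.src_comp _ _ cA0, hs2, hr1]; rfl
  -- the tricoloured path
  set p : P := S.comp (S.comp (e3 h8) (e2 g6)) (e1 f2) with hp
  have eA : p = S.comp (e1 f7) (S.comp (e2 g3) (e3 h1)) := by
    calc p = S.comp (e3 h8) (S.comp (e2 g6) (e1 f2)) :=
            S.comp_assoc _ _ _ cA0 cB0
    _ = S.comp (e3 h8) (S.comp (e1 f5) (e2 g1)) := by rw [C1]
    _ = S.comp (S.comp (e3 h8) (e1 f5)) (e2 g1) :=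
            (S.comp_assoc _ _ _ cA1 cA2).symm
    _ = S.comp (S.comp (e1 f7) (e3 h3)) (e2 g1) := by rw [C2]
    _ = S.comp (e1 f7) (S.comp (e3 h3) (e2 g1)) :=
            S.comp_assoc _ _ _ cA3 cA4
    _ = S.comp (e1 f7) (S.comp (e2 g3) (e3 h1)) := by rw [C3]
  have eB : p = S.comp (e1 f8) (S.comp (e2 g4) (e3 h2)) := by
    calc p = S.comp (S.comp (e2 g8) (e3 h6)) (e1 f2) := by rw [hp, C4]
    _ = S.comp (e2 g8) (S.comp (e3 h6) (e1 f2)) :=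
            S.comp_assoc _ _ _ cB1 cB2
    _ = S.comp (e2 g8) (S.comp (e1 f4) (e3 h2)) := by rw [C5]
    _ = S.comp (S.comp (e2 g8) (e1 f4)) (e3 h2) :=
            (S.comp_assoc _ _ _ cB3 cB4).symm
    _ = S.comp (S.comp (e1 f8) (e2 g4)) (e3 h2) := by rw [C6]
    _ = S.comp (e1 f8) (S.comp (e2 g4) (e3 h2)) :=
            S.comp_assoc _ _ _ cB5 cB6
  -- unique factorisation of p into degree e₁ + (e₂+e₃)
  have hdp : S.d p = Pi.single (0 : Fin 3) 1 +
      (Pi.single (1 : Fin 3) 1 + Pi.single (2 : Fin 3) 1) := by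
    rw [hp, S.d_comp _ _ cP2, S.d_comp _ _ cA0, hd1, hd2, hd3]
    abel
  have cA5 : S.src (e2 g3) = S.rng (e3 h1) := by rw [hs2, hr3]; rfl
  obtain ⟨q, -, huniq⟩ := S.factor p _ _ hdp
  have EA := huniq (e1 f7, S.comp (e2 g3) (e3 h1))
    ⟨by rw [hs1, S.rng_comp _ _ cA5, hr2]; rfl, hd1 f7,
     by rw [S.d_comp _ _ cA5, hd2, hd3], eA.symm⟩
  have EB := huniq (e1 f8, S.comp (e2 g4) (e3 h2))
    ⟨by rw [hs1, S.rng_comp _ _ cB6, hr2]; rfl, hd1 f8,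
     by rw [S.d_comp _ _ cB6, hd2, hd3], eB.symm⟩
  have hff : e1 f7 = e1 f8 := congrArg Prod.fst (EA.trans EB.symm)
  exact absurd (hi1 hff) (by decide)
end

section
/- Let Σ be a (k+1)-graph and ι : ℕ^k → ℕ^{k+1} the inclusion n ↦ (n,0). Let Σ^ι = {σ ∈ Σ : d(σ) ∈ ι(ℕ^k)}, regarded as a k-graph. Then X := Σ^{e_{k+1}}, with r and s inherited from Σ and φ(x,λ) = (λ',x') determined by the unique factorisation xλ = λ'x' with d(λ')=d(λ) and d(x')=e_{k+1}, is a Σ^ι endomorph (i.e., a (Σ^ι, Σ^ι) k-morph). -/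
open scoped Classical
/-- Auxiliary: the pair `(λ', x')` from the unique factorisation `xλ = λ'x'`. -/
noncomputable def phiPair {k : ℕ} {O P : Type} (S : KGraphStr (k+1) O P)
    (x lam : P) : P × P :=
  if h : S.src x = S.rng lam ∧ S.d x = Fin.snoc (0 : Fin k → ℕ) 1 then
    (S.factor (S.comp x lam) (S.d lam) (Fin.snoc (0 : Fin k → ℕ) 1)
      (by rw [S.d_comp x lam h.1, h.2]; exact add_comm _ _)).choose
  else (lam, x)

lemma phiPair_d1 {k : ℕ} {O P : Type} (S : KGraphStr (k+1) O P) (x lam : P) :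
    S.d (phiPair S x lam).1 = S.d lam := by
  unfold phiPair
  split
  · next h => exact (S.factor (S.comp x lam) (S.d lam) (Fin.snoc (0 : Fin k → ℕ) 1)
      (by rw [S.d_comp x lam h.1, h.2]; exact add_comm _ _)).choose_spec.1.2.1
  · rfl

lemma phiPair_d2 {k : ℕ} {O P : Type} (S : KGraphStr (k+1) O P) {x : P} (lam : P)
    (hx : S.d x = Fin.snoc (0 : Fin k → ℕ) 1) :
    S.d (phiPair S x lam).2 = Fin.snoc (0 : Fin k → ℕ) 1 := by
  unfold phiPair
  split
  · next h => exact (S.factor (S.comp x lam) (S.d lam) (Fin.snoc (0 : Fin k → ℕ) 1)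
      (by rw [S.d_comp x lam h.1, h.2]; exact add_comm _ _)).choose_spec.1.2.2.1
  · exact hx

lemma phiPair_spec {k : ℕ} {O P : Type} (S : KGraphStr (k+1) O P) {x lam : P}
    (h1 : S.src x = S.rng lam) (h2 : S.d x = Fin.snoc (0 : Fin k → ℕ) 1) :
    S.src (phiPair S x lam).1 = S.rng (phiPair S x lam).2 ∧
    S.d (phiPair S x lam).1 = S.d lam ∧
    S.d (phiPair S x lam).2 = Fin.snoc (0 : Fin k → ℕ) 1 ∧
    S.comp (phiPair S x lam).1 (phiPair S x lam).2 = S.comp x lam := by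
  unfold phiPair
  rw [dif_pos ⟨h1, h2⟩]
  exact (S.factor (S.comp x lam) (S.d lam) (Fin.snoc (0 : Fin k → ℕ) 1)
    (by rw [S.d_comp x lam h1, h2]; exact add_comm _ _)).choose_spec.1

lemma phiPair_unique {k : ℕ} {O P : Type} (S : KGraphStr (k+1) O P) {x lam μ ν : P}
    (h1 : S.src x = S.rng lam) (h2 : S.d x = Fin.snoc (0 : Fin k → ℕ) 1)
    (hs : S.src μ = S.rng ν) (hdμ : S.d μ = S.d lam)
    (hdν : S.d ν = Fin.snoc (0 : Fin k → ℕ) 1)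
    (hc : S.comp μ ν = S.comp x lam) :
    (μ, ν) = phiPair S x lam := by
  unfold phiPair
  rw [dif_pos ⟨h1, h2⟩]
  exact (S.factor (S.comp x lam) (S.d lam) (Fin.snoc (0 : Fin k → ℕ) 1)
    (by rw [S.d_comp x lam h1, h2]; exact add_comm _ _)).choose_spec.2 (μ, ν) ⟨hs, hdμ, hdν, hc⟩
/-- Key multiplicativity property of `phiPair`. -/
lemma phiPair_mult {k : ℕ} {O P : Type} (S : KGraphStr (k+1) O P) (x a b : P)
    (hx : S.d x = Fin.snoc (0 : Fin k → ℕ) 1)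
    (h1 : S.src x = S.rng a) (h2 : S.src a = S.rng b) :
    (S.comp (phiPair S x a).1 (phiPair S (phiPair S x a).2 b).1,
     (phiPair S (phiPair S x a).2 b).2) = phiPair S x (S.comp a b) := by
  obtain ⟨s1, dμ1, dν1, c1⟩ := phiPair_spec S h1 hx
  have hν₁b : S.src (phiPair S x a).2 = S.rng b := by
    have h := congrArg S.src c1
    rw [S.src_comp _ _ s1, S.src_comp _ _ h1] at h
    exact h.trans h2
  obtain ⟨s2, dμ2, dν2, c2⟩ := phiPair_spec S hν₁b dν1
  have hμμ : S.src (phiPair S x a).1 = S.rng (phiPair S (phiPair S x a).2 b).1 := by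
    have h := congrArg S.rng c2
    rw [S.rng_comp _ _ s2, S.rng_comp _ _ hν₁b] at h
    rw [s1, ← h]
  apply phiPair_unique S ?_ hx ?_ ?_ dν2 ?_
  · rw [S.rng_comp a b h2]; exact h1
  · rw [S.src_comp _ _ hμμ]; exact s2
  · rw [S.d_comp _ _ hμμ, S.d_comp _ _ h2, dμ1, dμ2]
  · rw [S.comp_assoc _ _ _ hμμ s2, c2, ← S.comp_assoc _ _ _ s1 hν₁b, c1,
      S.comp_assoc _ _ _ h1 h2]
/-- let `S` be a `(k+1)`-graph and let `T` be the k-graph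
`Σ^ι` of paths of degree in `ι(ℕ^k)` (same vertices, degree the first `k`
coordinates, and structure maps restricted from `S`).  Then the set
`X = Σ^{e_{k+1}}` of degree-`e_{k+1}` edges, with `r`, `s` inherited from `S`
and `φ(x,λ) = (λ',x')` determined by the unique factorisation `xλ = λ'x'`, is
a `(T,T)` k-morph (a `Σ^ι` endomorph). -/
theorem slice_endomorph {k : ℕ} {O P : Type} (S : KGraphStr (k+1) O P)
    (T : KGraphStr k O {p : P // S.d p (Fin.last k) = 0})
    -- `T` is the k-graph `Σ^ι`:
    (hsrc : ∀ p, T.src p = S.src p.1)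
    (hrng : ∀ p, T.rng p = S.rng p.1)
    (hd : ∀ p (i : Fin k), T.d p i = S.d p.1 i.castSucc)
    (hident : ∀ v, (T.ident v).1 = S.ident v)
    (hcomp : ∀ p q, T.src p = T.rng q → (T.comp p q).1 = S.comp p.1 q.1) :
    ∃ M : KMorph T T {σ : P // S.d σ = Fin.snoc (0 : Fin k → ℕ) 1},
      (∀ x, M.r x = S.rng x.1) ∧
      (∀ x, M.s x = S.src x.1) ∧
      (∀ x lam, M.s x = T.rng lam →
        S.comp x.1 lam.1 = S.comp (M.φl x lam).1 (M.φx x lam).1) := by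
  classical
  haveI : Countable P := S.countable
  refine ⟨{
    countable := inferInstance
    r := fun x => S.rng x.1
    s := fun x => S.src x.1
    φl := fun x lam => ⟨(phiPair S x.1 lam.1).1, by rw [phiPair_d1]; exact lam.2⟩
    φx := fun x lam => ⟨(phiPair S x.1 lam.1).2, phiPair_d2 S lam.1 x.2⟩
    src_φl := ?_
    d_φl := ?_
    s_φx := ?_
    rng_φl := ?_
    mult_φl := ?_
    mult_φx := ?_
    bij := ?_ }, fun _ => rfl, fun _ => rfl, ?_⟩
  · -- src_φl
    intro x γ h
    have h1 : S.src x.1 = S.rng γ.1 := h.trans (hrng γ)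
    rw [hsrc]
    exact (phiPair_spec S h1 x.2).1
  · -- d_φl
    intro x γ h
    have h1 : S.src x.1 = S.rng γ.1 := h.trans (hrng γ)
    funext i
    rw [hd, hd]
    exact congrFun (phiPair_spec S h1 x.2).2.1 i.castSucc
  · -- s_φx
    intro x γ h
    have h1 : S.src x.1 = S.rng γ.1 := h.trans (hrng γ)
    obtain ⟨s1, _, _, c1⟩ := phiPair_spec S h1 x.2
    rw [hsrc]
    have hh := congrArg S.src c1
    rw [S.src_comp _ _ s1, S.src_comp _ _ h1] at hh
    exact hh
  · -- rng_φl
    intro x γ h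
    have h1 : S.src x.1 = S.rng γ.1 := h.trans (hrng γ)
    obtain ⟨s1, _, _, c1⟩ := phiPair_spec S h1 x.2
    rw [hrng]
    have hh := congrArg S.rng c1
    rw [S.rng_comp _ _ s1, S.rng_comp _ _ h1] at hh
    exact hh
  · -- mult_φl
    intro x γ₁ γ₂ hA hB
    have h1 : S.src x.1 = S.rng γ₁.1 := hA.trans (hrng γ₁)
    have h2 : S.src γ₁.1 = S.rng γ₂.1 := (hsrc γ₁).symm.trans (hB.trans (hrng γ₂))
    have key := phiPair_mult S x.1 γ₁.1 γ₂.1 x.2 h1 h2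
    obtain ⟨s1, dμ1, dν1, c1⟩ := phiPair_spec S h1 x.2
    have hν₁b : S.src (phiPair S x.1 γ₁.1).2 = S.rng γ₂.1 := by
      have hh := congrArg S.src c1
      rw [S.src_comp _ _ s1, S.src_comp _ _ h1] at hh
      exact hh.trans h2
    obtain ⟨s2, dμ2, dν2, c2⟩ := phiPair_spec S hν₁b dν1
    have hμμ : S.src (phiPair S x.1 γ₁.1).1
        = S.rng (phiPair S (phiPair S x.1 γ₁.1).2 γ₂.1).1 := by
      have hh := congrArg S.rng c2
      rw [S.rng_comp _ _ s2, S.rng_comp _ _ hν₁b] at hh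
      rw [s1, ← hh]
    have hT : T.src ⟨(phiPair S x.1 γ₁.1).1, by rw [phiPair_d1]; exact γ₁.2⟩
        = T.rng ⟨(phiPair S (phiPair S x.1 γ₁.1).2 γ₂.1).1,
            by rw [phiPair_d1]; exact γ₂.2⟩ := by
      rw [hsrc, hrng]; exact hμμ
    apply Subtype.ext
    show (phiPair S x.1 (T.comp γ₁ γ₂).1).1 = (T.comp _ _).1
    rw [hcomp _ _ hT, hcomp _ _ hB]
    exact (congrArg Prod.fst key).symm
  · -- mult_φx
    intro x γ₁ γ₂ hA hB
    have h1 : S.src x.1 = S.rng γ₁.1 := hA.trans (hrng γ₁)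
    have h2 : S.src γ₁.1 = S.rng γ₂.1 := (hsrc γ₁).symm.trans (hB.trans (hrng γ₂))
    have key := phiPair_mult S x.1 γ₁.1 γ₂.1 x.2 h1 h2
    apply Subtype.ext
    show (phiPair S x.1 (T.comp γ₁ γ₂).1).2 = _
    rw [hcomp _ _ hB]
    exact (congrArg Prod.snd key).symm
  · -- bij
    intro lam' x' h
    have h' : S.src lam'.1 = S.rng x'.1 := (hsrc lam').symm.trans h
    have hdc : S.d (S.comp lam'.1 x'.1)
        = Fin.snoc (0 : Fin k → ℕ) 1 + S.d lam'.1 := by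
      rw [S.d_comp _ _ h', x'.2]; exact add_comm _ _
    obtain ⟨⟨a, b⟩, ⟨hsab, hda, hdb, hcab⟩, huniq⟩ :=
      S.factor (S.comp lam'.1 x'.1) (Fin.snoc (0 : Fin k → ℕ) 1) (S.d lam'.1) hdc
    have hkey : (lam'.1, x'.1) = phiPair S a b :=
      phiPair_unique S hsab hda h' hdb.symm x'.2 hcab.symm
    refine ⟨(⟨a, hda⟩, ⟨b, by rw [hdb]; exact lam'.2⟩), ⟨?_, ?_, ?_⟩, ?_⟩
    · rw [hrng]; exact hsab
    · exact Subtype.ext (congrArg Prod.fst hkey).symm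
    · exact Subtype.ext (congrArg Prod.snd hkey).symm
    · rintro ⟨y, mu⟩ ⟨hq1, hq2, hq3⟩
      have hy1 : S.src y.1 = S.rng mu.1 := hq1.trans (hrng mu)
      obtain ⟨sY, dY1, dY2, cY⟩ := phiPair_spec S hy1 y.2
      have e1 : (phiPair S y.1 mu.1).1 = lam'.1 := congrArg Subtype.val hq2
      have e2 : (phiPair S y.1 mu.1).2 = x'.1 := congrArg Subtype.val hq3
      have hmu : S.d mu.1 = S.d lam'.1 := by rw [← dY1, e1]
      have hc : S.comp y.1 mu.1 = S.comp lam'.1 x'.1 := by rw [← cY, e1, e2]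
      have hp : (y.1, mu.1) = (a, b) := huniq (y.1, mu.1) ⟨hy1, y.2, hmu, hc⟩
      exact Prod.ext (Subtype.ext (congrArg Prod.fst hp))
        (Subtype.ext (congrArg Prod.snd hp))
  · -- the factorisation equation
    intro x lam h
    have h1 : S.src x.1 = S.rng lam.1 := h.trans (hrng lam)
    exact (phiPair_spec S h1 x.2).2.2.2.symm
end

section
/- Let p : Λ₁ → Λ₀ and q : Λ₂ → Λ₁ be coverings of k-graphs, so p∘q : Λ₂ → Λ₀ is a covering. Then v ↦ (q(v), v) defines an isomorphism of k-morphs from the covering k-morph of p∘q onto the fibred product of the covering k-morphs of p and q: X_{p∘q} ≅ ₚX *_{Λ₁⁰} _qX. -/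
/-- Composition of k-graph morphisms. -/
def KGraphHom.compH {k : ℕ} {O₂ P₂ O₁ P₁ O₀ P₀ : Type}
    {Λ₂ : KGraphStr k O₂ P₂} {Λ₁ : KGraphStr k O₁ P₁} {Λ₀ : KGraphStr k O₀ P₀}
    (F : KGraphHom Λ₁ Λ₀) (G : KGraphHom Λ₂ Λ₁) : KGraphHom Λ₂ Λ₀ where
  vmap := F.vmap ∘ G.vmap
  pmap := F.pmap ∘ G.pmap
  src_pmap p := by simp [F.src_pmap, G.src_pmap]
  rng_pmap p := by simp [F.rng_pmap, G.rng_pmap]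
  d_pmap p := by simp [F.d_pmap, G.d_pmap]
  ident_pmap v := by simp [F.ident_pmap, G.ident_pmap]
  comp_pmap p q h := by
    simp only [Function.comp_apply, G.comp_pmap p q h]
    exact F.comp_pmap _ _ (by rw [G.src_pmap, G.rng_pmap, h])

attribute [reducible] FibCarrier

/-- if `p : Λ₁ → Λ₀` and `q : Λ₂ → Λ₁` are coverings of
k-graphs then `p ∘ q` is a covering, and `v ↦ (q(v), v)` is an isomorphism of
k-morphs `X_{p∘q} ≅ ₚX *_{Λ₁⁰} _qX` from the covering k-morph of `p ∘ q` onto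
the fibred product of the covering k-morphs of `p` and `q`. -/
theorem covering_comp_morph {k : ℕ} {O₂ P₂ O₁ P₁ O₀ P₀ : Type}
    {Λ₂ : KGraphStr k O₂ P₂} {Λ₁ : KGraphStr k O₁ P₁} {Λ₀ : KGraphStr k O₀ P₀}
    (F : KGraphHom Λ₁ Λ₀) (hF : IsCovering F)
    (G : KGraphHom Λ₂ Λ₁) (hG : IsCovering G)
    (Mpq : KMorph Λ₀ Λ₂ O₂) (hMpq : IsXalpha (F.compH G) Mpq)
    (Mp : KMorph Λ₀ Λ₁ O₁) (hMp : IsXalpha F Mp)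
    (Mq : KMorph Λ₁ Λ₂ O₂) (hMq : IsXalpha G Mq)
    (P : KMorph Λ₀ Λ₂ (FibCarrier Mp Mq)) (hP : IsFibProd Mp Mq P) :
    IsCovering (F.compH G) ∧
    ∃ E : MorphIso Mpq P, ∀ v : O₂,
      ((E.θ v).1.1 = G.vmap v ∧ (E.θ v).1.2 = v) := by
  obtain ⟨hFs, hFr, hFsr⟩ := hF
  obtain ⟨hGs, hGr, hGsr⟩ := hG
  obtain ⟨hMpq_r, hMpq_s, hMpq_φ⟩ := hMpq
  obtain ⟨hMp_r, hMp_s, hMp_φ⟩ := hMp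
  obtain ⟨hMq_r, hMq_s, hMq_φ⟩ := hMq
  obtain ⟨hP_r, hP_s, hP_φ⟩ := hP
  constructor
  · refine ⟨hFs.comp hGs, fun v => ?_, fun v => ?_⟩
    · exact (hFr (G.vmap v)).comp (hGr v)
    · exact (hFsr (G.vmap v)).comp (hGsr v)
  · have hmem : ∀ v : O₂, Mp.s (G.vmap v) = Mq.r v := by
      intro v; rw [hMp_s, hMq_r]
    refine ⟨⟨⟨fun v => ⟨(G.vmap v, v), hmem v⟩, fun p => p.1.2, fun v => rfl,
      fun p => ?_⟩, ?_, ?_, ?_, ?_⟩, fun v => ⟨rfl, rfl⟩⟩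
    · have h1 : p.1.1 = G.vmap p.1.2 := by
        have := p.2; rw [hMp_s, hMq_r] at this; exact this
      exact Subtype.ext (Prod.ext h1.symm rfl)
    · intro v
      simp only [Equiv.coe_fn_mk]
      rw [hP_r, hMp_r, hMpq_r]; rfl
    · intro v
      simp only [Equiv.coe_fn_mk]
      rw [hP_s, hMq_s, hMpq_s]
    · intro v γ hv
      rw [hMpq_s] at hv
      simp only [Equiv.coe_fn_mk]
      have hs : P.s ⟨(G.vmap v, v), hmem v⟩ = Λ₂.rng γ := by
        rw [hP_s, hMq_s]; exact hv
      obtain ⟨hl, _, _⟩ := hP_φ ⟨(G.vmap v, v), hmem v⟩ γ hs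
      rw [hl]
      have hq : Mq.s v = Λ₂.rng γ := by rw [hMq_s]; exact hv
      obtain ⟨hql, hqx⟩ := hMq_φ v γ hq
      rw [hql]
      have hp : Mp.s (G.vmap v) = Λ₁.rng (G.pmap γ) := by
        rw [hMp_s, G.rng_pmap, ← hv]
      obtain ⟨hpl, _⟩ := hMp_φ (G.vmap v) (G.pmap γ) hp
      rw [hpl]
      exact ((hMpq_φ v γ (by rw [hMpq_s]; exact hv)).1).symm
    · intro v γ hv
      rw [hMpq_s] at hv
      simp only [Equiv.coe_fn_mk]
      have hs : P.s ⟨(G.vmap v, v), hmem v⟩ = Λ₂.rng γ := by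
        rw [hP_s, hMq_s]; exact hv
      obtain ⟨_, hx1, hx2⟩ := hP_φ ⟨(G.vmap v, v), hmem v⟩ γ hs
      have hq : Mq.s v = Λ₂.rng γ := by rw [hMq_s]; exact hv
      obtain ⟨hql, hqx⟩ := hMq_φ v γ hq
      have hp : Mp.s (G.vmap v) = Λ₁.rng (G.pmap γ) := by
        rw [hMp_s, G.rng_pmap, ← hv]
      obtain ⟨_, hpx⟩ := hMp_φ (G.vmap v) (G.pmap γ) hp
      have hpqx := (hMpq_φ v γ (by rw [hMpq_s]; exact hv)).2
      refine Subtype.ext (Prod.ext ?_ ?_)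
      · rw [hx1, hql, hpx, G.src_pmap, hpqx]
      · rw [hx2, hqx, hpqx]
end
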